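/- arXiv:1304.1826 — 7 statements merged into one kernel-verified Lean document; each statement's English description precedes it below -/
import Mathlib

section
/- Let $A = (a_{\mathbf{i}})_{\mathbf{i} \in [n]^d}$ be a $d$-indexed real matrix and let $C = \{\mathbf{i} \in [n]^d : i_k = i_l \text{ for all } k,l \in K\}$ for some fixed subset $K \subseteq [d]$. Then for every partition $\mathcal{J}$ of $[d]$, $\|A \circ \mathbf{1}_C\|_{\mathcal{J}} \le \|A\|_{\mathcal{J}}$, i.e., restricting a matrix to a generalized diagonal does not increase any $\|\cdot\|_{\mathcal{J}}$ norm. -/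
/-!
Multiplying `A` entrywise by `ε(i_k)` for a sign vector `ε : [n] → {±1}` does not increase
`‖A‖_𝒥`: the sign is absorbed into the test array of the part of `𝒥` containing `k`.
By orthogonality of Rademacher signs, the average of `ε(i_k) ε(i_l) A` over all `2^n` sign
vectors is `A ∘ 1_{i_k = i_l}`, so restricting to a single pairwise diagonal does not increase the
norm, and the generalized diagonal `C` is the intersection of the pairwise diagonals over `K × K`.
-/

open Finset

/-- The tensor-product norm `‖A‖_𝒥` of a `d`-indexed matrix
`A = (a_i)_{i ∈ [n]^d}` associated to a partition `P` of `[d]`: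
the supremum of `∑_i a_i ∏_{J ∈ P} x^{(J)}_{i_J}` over families of arrays
`x^{(J)}` indexed by `[n]^J`, each of Euclidean norm at most `1`. -/
noncomputable def normJ {n d : ℕ} (A : (Fin d → Fin n) → ℝ)
    (P : Finpartition (Finset.univ : Finset (Fin d))) : ℝ :=
  sSup {S : ℝ |
    ∃ x : (J : Finset (Fin d)) → ({k : Fin d // k ∈ J} → Fin n) → ℝ,
      (∀ J ∈ P.parts, ∑ y : {k : Fin d // k ∈ J} → Fin n, (x J y) ^ 2 ≤ 1) ∧
      S = ∑ i : Fin d → Fin n, A i * ∏ J ∈ P.parts, x J (fun k => i k.1)}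

namespace NormJ

variable {n d : ℕ}

def InUnitBall (P : Finpartition (univ : Finset (Fin d)))
    (x : (J : Finset (Fin d)) → ({k : Fin d // k ∈ J} → Fin n) → ℝ) : Prop :=
  ∀ J ∈ P.parts, ∑ y : {k : Fin d // k ∈ J} → Fin n, x J y ^ 2 ≤ 1

def pairing (A : (Fin d → Fin n) → ℝ) (P : Finpartition (univ : Finset (Fin d)))
    (x : (J : Finset (Fin d)) → ({k : Fin d // k ∈ J} → Fin n) → ℝ) : ℝ :=
  ∑ i : Fin d → Fin n, A i * ∏ J ∈ P.parts, x J (fun k => i k.1)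

variable {A : (Fin d → Fin n) → ℝ} {P : Finpartition (univ : Finset (Fin d))}
  {x : (J : Finset (Fin d)) → ({k : Fin d // k ∈ J} → Fin n) → ℝ}

lemma abs_le_one_of_inUnitBall (hx : InUnitBall P x) {J : Finset (Fin d)} (hJ : J ∈ P.parts)
    (y : {k : Fin d // k ∈ J} → Fin n) : |x J y| ≤ 1 :=
  sq_le_one_iff_abs_le_one _ |>.mp <|
    (single_le_sum (f := fun z => x J z ^ 2) (fun _ _ => sq_nonneg _) (mem_univ y)).trans
      (hx J hJ)

lemma pairing_le_sum_abs (hx : InUnitBall P x) : pairing A P x ≤ ∑ i, |A i| := by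
  refine sum_le_sum fun i _ => (le_abs_self _).trans ?_
  rw [abs_mul, abs_prod]
  exact mul_le_of_le_one_right (abs_nonneg _)
    (prod_le_one (fun _ _ => abs_nonneg _) fun J hJ => abs_le_one_of_inUnitBall hx hJ _)

lemma pairing_le_normJ (hx : InUnitBall P x) : pairing A P x ≤ normJ A P :=
  le_csSup ⟨_, by rintro _ ⟨x, hx, rfl⟩; exact pairing_le_sum_abs hx⟩ ⟨x, hx, rfl⟩

lemma normJ_le {c : ℝ} (h : ∀ x, InUnitBall P x → pairing A P x ≤ c) : normJ A P ≤ c :=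
  csSup_le ⟨_, fun _ _ => 0, fun J _ => by simp, rfl⟩ (by rintro _ ⟨x, hx, rfl⟩; exact h x hx)

def twist (x : (J : Finset (Fin d)) → ({k : Fin d // k ∈ J} → Fin n) → ℝ) (k : Fin d)
    (f : Fin n → ℝ) (J : Finset (Fin d)) (y : {k : Fin d // k ∈ J} → Fin n) : ℝ :=
  x J y * if h : k ∈ J then f (y ⟨k, h⟩) else 1

lemma inUnitBall_twist {f : Fin n → ℝ} (hf : ∀ j, f j ^ 2 = 1) (hx : InUnitBall P x)
    (k : Fin d) : InUnitBall P (twist x k f) := by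
  intro J hJ
  convert hx J hJ using 2 with y
  unfold twist
  split_ifs <;> simp [mul_pow, hf]

lemma prod_twist (k : Fin d) (f : Fin n → ℝ) (i : Fin d → Fin n) :
    ∏ J ∈ P.parts, twist x k f J (fun m => i m.1) =
      f (i k) * ∏ J ∈ P.parts, x J (fun m => i m.1) := by
  obtain ⟨J₀, ⟨hJ₀, hk⟩, huniq⟩ := P.existsUnique_mem (mem_univ k)
  have hf : ∏ J ∈ P.parts, (if h : k ∈ J then f (i k) else 1) = f (i k) := by
    rw [prod_eq_single_of_mem J₀ hJ₀ fun J hJ hne => dif_neg fun hkJ => hne (huniq J ⟨hJ, hkJ⟩),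
      dif_pos hk]
  simp only [twist, prod_mul_distrib, hf, mul_comm]

lemma pairing_twist (k : Fin d) (f : Fin n → ℝ) :
    pairing A P (twist x k f) = pairing (fun i => f (i k) * A i) P x := by
  simp only [pairing, prod_twist]
  exact sum_congr rfl fun _ _ => by ring

lemma normJ_mul_sign_le {f : Fin n → ℝ} (hf : ∀ j, f j ^ 2 = 1) (k : Fin d) :
    normJ (fun i => f (i k) * A i) P ≤ normJ A P :=
  normJ_le fun _ hx => pairing_twist (A := A) k f ▸ pairing_le_normJ (inUnitBall_twist hf hx k)

section Rademacher

variable {ι : Type*}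

def rademacher (σ : ι → Bool) (a : ι) : ℝ := if σ a then 1 else -1

lemma rademacher_sq (σ : ι → Bool) (a : ι) : rademacher σ a ^ 2 = 1 := by
  unfold rademacher; split_ifs <;> norm_num

lemma sum_rademacher_mul_rademacher [Fintype ι] [DecidableEq ι] (a b : ι) :
    ∑ σ : ι → Bool, rademacher σ a * rademacher σ b =
      if a = b then (2 : ℝ) ^ Fintype.card ι else 0 := by
  split_ifs with hab
  · subst hab
    simp [← sq, rademacher_sq, card_univ]
  -- flipping the sign at `a` negates each summand
  refine sum_ninvolution (fun σ => Function.update σ a (!σ a)) (fun σ => ?_)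
    (fun σ _ h => by simpa using congrFun h a) (fun _ => mem_univ _) (fun σ => by simp)
  simp only [rademacher, Function.update_self, Function.update_of_ne (Ne.symm hab)]
  cases σ a <;> cases σ b <;> norm_num

end Rademacher

lemma normJ_restrict_pair_le (k l : Fin d) :
    normJ (fun i => if i k = i l then A i else 0) P ≤ normJ A P := by
  have hdiag : ∀ i : Fin d → Fin n, (if i k = i l then A i else 0) =
      (2 ^ n)⁻¹ * ∑ σ : Fin n → Bool, rademacher σ (i k) * (rademacher σ (i l) * A i) := by
    intro i
    simp_rw [← mul_assoc, ← sum_mul, sum_rademacher_mul_rademacher, Fintype.card_fin]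
    split_ifs <;> simp
  refine normJ_le fun x hx => ?_
  calc pairing (fun i => if i k = i l then A i else 0) P x
      = (2 ^ n)⁻¹ * ∑ σ : Fin n → Bool,
          pairing (fun i => rademacher σ (i k) * (rademacher σ (i l) * A i)) P x := by
        simp only [pairing, hdiag, sum_mul, mul_sum]
        rw [sum_comm]
        simp only [mul_assoc]
    _ ≤ (2 ^ n)⁻¹ * ∑ _σ : Fin n → Bool, normJ A P := by
        gcongr with σ
        exact (pairing_le_normJ hx).trans <| (normJ_mul_sign_le (rademacher_sq σ) k).trans
          (normJ_mul_sign_le (rademacher_sq σ) l)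
    _ = normJ A P := by simp [card_univ]

lemma normJ_restrict_le (S : Finset (Fin d × Fin d)) :
    normJ (fun i => if ∀ p ∈ S, i p.1 = i p.2 then A i else 0) P ≤ normJ A P := by
  induction S using Finset.induction_on with
  | empty => simp
  | insert p S _ ih =>
    simp only [forall_mem_insert, ite_and]
    exact normJ_restrict_pair_le p.1 p.2 |>.trans ih

end NormJ

/-- Restricting a matrix to a generalized diagonal
`C = {i ∈ [n]^d : i_k = i_l for all k,l ∈ K}` does not increase any `‖·‖_𝒥` norm:
`‖A ∘ 1_C‖_𝒥 ≤ ‖A‖_𝒥`. -/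
theorem stmt1 (n d : ℕ) (A : (Fin d → Fin n) → ℝ) (K : Finset (Fin d))
    (P : Finpartition (Finset.univ : Finset (Fin d))) :
    normJ (fun i => if ∀ k ∈ K, ∀ l ∈ K, i k = i l then A i else 0) P ≤ normJ A P := by
  have hK : ∀ i : Fin d → Fin n,
      (∀ k ∈ K, ∀ l ∈ K, i k = i l) ↔ ∀ p ∈ K ×ˢ K, i p.1 = i p.2 :=
    fun i => ⟨fun h p hp => h _ (mem_product.1 hp).1 _ (mem_product.1 hp).2,
      fun h k hk l hl => h (k, l) (mk_mem_product hk hl)⟩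
  simp only [hK]
  exact NormJ.normJ_restrict_le (K ×ˢ K)
end

section
/- Let $A$ be a $d$-indexed real matrix and let $\mathcal{K} \in P_d$ be a partition of $[d]$. Define $L(\mathcal{K}) = \{\mathbf{i} \in [n]^d : i_k = i_l \text{ iff } k,l \text{ belong to the same block of } \mathcal{K}\}$. Then for every partition $\mathcal{J}$ of $[d]$, $\|A \circ \mathbf{1}_{L(\mathcal{K})}\|_{\mathcal{J}} \le 2^{\#\mathcal{K}(\#\mathcal{K}-1)/2} \|A\|_{\mathcal{J}}$. -/
open Finset

/-!
Restricting `A` to `{i : i_k = i_l}` does not increase `‖A‖_𝒥`. If `k` and `l` lie in one block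
`J` of `𝒥`, restrict the test array `x^{(J)}` to indices with equal `k`- and `l`-coordinates
instead. Otherwise split the sum according to the common value `a = i_k = i_l`: the `a`-th piece
is the form evaluated at test arrays restricted to `{y_k = a}` and `{y_l = a}`, so by homogeneity
it is at most `‖A‖_𝒥 · |x_a^{(J_k)}| · |x_a^{(J_l)}|`, and Cauchy–Schwarz in `a` sums these
to at most `‖A‖_𝒥`. Iterating, restricting `A` to the solutions of any set of equations
`i_k = i_l` never increases `‖A‖_𝒥`.

An index lies in `L(𝒦)` iff it is constant on every block of `𝒦` (event `E`) and not constant on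
`B ∪ B'` for any two distinct blocks, so by inclusion–exclusion
`1_{L(𝒦)} = 1_E ∏_{{B, B'}} (1 - 1[i constant on B ∪ B']) = ∑_T (-1)^{#T} 1_{E_T}`,
where `T` runs over sets of pairs of blocks and each `E_T` is cut out by equations `i_k = i_l`.
There are `2^{#𝒦(#𝒦-1)/2}` such `T`, and the triangle inequality finishes the proof.
-/

theorem Finset.prod_le_mul_of_le_one {ι R : Type*} [CommMonoidWithZero R] [Preorder R]
    [ZeroLEOneClass R] [PosMulMono R] {s : Finset ι} {f : ι → R} {a b : ι}
    (ha : a ∈ s) (hb : b ∈ s) (hab : a ≠ b) (h0 : ∀ i ∈ s, 0 ≤ f i) (h1 : ∀ i ∈ s, f i ≤ 1) :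
    ∏ i ∈ s, f i ≤ f a * f b := by
  classical
  have hb' : b ∈ s.erase a := mem_erase.2 ⟨hab.symm, hb⟩
  rw [← mul_prod_erase s f ha, ← mul_prod_erase _ f hb']
  refine mul_le_mul_of_nonneg_left (mul_le_of_le_one_right (h0 b hb) (prod_le_one ?_ ?_)) (h0 a ha)
  · exact fun i hi => h0 i (mem_of_mem_erase (mem_of_mem_erase hi))
  · exact fun i hi => h1 i (mem_of_mem_erase (mem_of_mem_erase hi))

theorem Finset.sum_ite_eq_and_eq {α R : Type*} [Fintype α] [DecidableEq α] [AddCommMonoid R]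
    (u v : α) (b : R) : ∑ a, (if u = a ∧ v = a then b else 0) = if u = v then b else 0 := by
  split_ifs with h
  · subst h; simp
  · exact sum_eq_zero fun a _ => if_neg fun ⟨hu, hv⟩ => h (hu.trans hv.symm)

theorem Finset.sum_sum_sq_ite_le {Y α : Type*} [Fintype Y] [Fintype α] [DecidableEq α]
    (p : α → Y → Prop) [∀ a y, Decidable (p a y)] (g : Y → α) (hp : ∀ a y, p a y → g y = a)
    (v : Y → ℝ) : ∑ a, ∑ y, (if p a y then v y else 0) ^ 2 ≤ ∑ y, v y ^ 2 := by
  calc ∑ a, ∑ y, (if p a y then v y else 0) ^ 2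
      ≤ ∑ a, ∑ y, (if g y = a then v y ^ 2 else 0) := by
        refine sum_le_sum fun a _ => sum_le_sum fun y _ => ?_
        by_cases h : p a y
        · simp [h, hp a y h]
        · rw [if_neg h, sq, zero_mul]
          split_ifs <;> positivity
    _ = ∑ y, v y ^ 2 := by rw [sum_comm]; simp

open Classical in
theorem Finset.ite_forall_not_eq_sum_powerset {ι R : Type*} [CommRing R]
    (s : Finset ι) (q : ι → Prop) (b : R) :
    (if ∀ e ∈ s, ¬ q e then b else 0) =
      ∑ T ∈ s.powerset, (-1) ^ #T * if ∀ e ∈ T, q e then b else 0 := by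
  have h := prod_sub (fun _ => (1 : R)) (fun e => if q e then 1 else 0) s
  simp only [prod_const_one, mul_one, prod_boole] at h
  have hone : ∀ e, (1 : R) - (if q e then 1 else 0) = if ¬ q e then 1 else 0 := fun e => by
    split_ifs <;> simp
  simp only [hone, prod_boole] at h
  calc (if ∀ e ∈ s, ¬ q e then b else 0) = (if ∀ e ∈ s, ¬ q e then 1 else 0) * b := by
        split_ifs <;> simp
    _ = _ := by
        rw [h, sum_mul]
        refine sum_congr rfl fun T _ => ?_
        split_ifs <;> simp

theorem Finpartition.forall_mem_parts_imp_iff {α : Type*} [DecidableEq α] {s : Finset α}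
    (P : Finpartition s) {k : α} (hk : k ∈ s) (q : Prop) : (∀ J ∈ P.parts, k ∈ J → q) ↔ q :=
  ⟨fun h => h _ (P.part_mem.2 hk) (P.mem_part hk), fun h _ _ _ => h⟩

namespace Finpartition

variable {α β : Type*} [Fintype α] [DecidableEq α] (K : Finpartition (univ : Finset α))

theorem exists_mem_parts_iff_part_eq (k l : α) :
    (∃ B ∈ K.parts, k ∈ B ∧ l ∈ B) ↔ K.part k = K.part l := by
  rw [← K.mem_part_iff_exists, K.mem_part_iff_part_eq_part (mem_univ k) (mem_univ l)]

def LinkedBy (T : Finset (Finset (Finset α))) (k l : α) : Prop :=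
  K.part k = K.part l ∨ ∃ e ∈ T, K.part k ∈ e ∧ K.part l ∈ e

theorem forall_linkedBy_iff (i : α → β) (T : Finset (Finset (Finset α))) :
    (∀ k l, K.LinkedBy T k l → i k = i l) ↔
      (∀ k l, K.part k = K.part l → i k = i l) ∧
        ∀ e ∈ T, ∀ k l, K.part k ∈ e → K.part l ∈ e → i k = i l := by
  simp only [LinkedBy, or_imp, forall_and, forall_exists_index, and_imp]
  exact and_congr_right' ⟨fun h e he k l => h k l e he, fun h k l e he => h e he k l⟩

-- `levelSet` refers to the paper's `L(𝒦)`, the indices `i` with the left-hand property below.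
theorem levelSet_iff (i : α → β) :
    (∀ k l, i k = i l ↔ ∃ B ∈ K.parts, k ∈ B ∧ l ∈ B) ↔
      (∀ k l, K.part k = K.part l → i k = i l) ∧
        ∀ e ∈ K.parts.powersetCard 2, ¬ ∀ k l, K.part k ∈ e → K.part l ∈ e → i k = i l := by
  simp only [exists_mem_parts_iff_part_eq]
  constructor
  · intro h
    refine ⟨fun k l => (h k l).2, fun e he hconst => ?_⟩
    obtain ⟨hsub, hcard⟩ := mem_powersetCard.1 he
    obtain ⟨B₁, B₂, hne, rfl⟩ := card_eq_two.1 hcard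
    have hB₁ := hsub (mem_insert_self _ _)
    have hB₂ := hsub (mem_insert_of_mem (mem_singleton_self _))
    obtain ⟨k, hk⟩ := K.nonempty_of_mem_parts hB₁
    obtain ⟨l, hl⟩ := K.nonempty_of_mem_parts hB₂
    rw [← K.part_eq_of_mem hB₁ hk, ← K.part_eq_of_mem hB₂ hl] at hne hconst
    exact hne ((h k l).1 (hconst k l (by simp) (by simp)))
  · rintro ⟨hE, hsep⟩ k l
    refine ⟨fun hkl => ?_, hE k l⟩
    by_contra hne
    refine hsep {K.part k, K.part l} (mem_powersetCard.2 ⟨?_, card_pair hne⟩)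
      fun k' l' hk' hl' => ?_
    · simp [insert_subset_iff]
    · have key : ∀ m, K.part m ∈ ({K.part k, K.part l} : Finset _) → i m = i k := by
        intro m hm
        rcases mem_insert.1 hm with h | h
        · exact hE m k h
        · exact (hE m l (mem_singleton.1 h)).trans hkl.symm
      rw [key k' hk', key l' hl']

open Classical in
theorem ite_levelSet_eq_sum_powerset {R : Type*} [CommRing R] [DecidableEq β] (i : α → β)
    (b : R) :
    (if ∀ k l, i k = i l ↔ ∃ B ∈ K.parts, k ∈ B ∧ l ∈ B then b else 0) =
      ∑ T ∈ (K.parts.powersetCard 2).powerset,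
        (-1) ^ #T * if ∀ k l, K.LinkedBy T k l → i k = i l then b else 0 := by
  simp only [K.levelSet_iff i, K.forall_linkedBy_iff i,
    and_comm (a := ∀ k l, K.part k = K.part l → i k = i l), ite_and]
  convert Finset.ite_forall_not_eq_sum_powerset _ _
    (if ∀ k l, K.part k = K.part l → i k = i l then b else 0)

end Finpartition

abbrev BlockArrays (n d : ℕ) : Type :=
  (J : Finset (Fin d)) → ({k : Fin d // k ∈ J} → Fin n) → ℝ

section

variable {n d : ℕ} (A : (Fin d → Fin n) → ℝ) (P : Finpartition (univ : Finset (Fin d)))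

def tensorForm (x : BlockArrays n d) : ℝ :=
  ∑ i, A i * ∏ J ∈ P.parts, x J (fun k => i k.1)

def InUnitBalls (x : BlockArrays n d) : Prop :=
  ∀ J ∈ P.parts, ∑ y, x J y ^ 2 ≤ 1

variable {A P}

theorem tensorForm_le_sum_abs {x : BlockArrays n d} (hx : InUnitBalls P x) :
    tensorForm A P x ≤ ∑ i, |A i| := by
  refine sum_le_sum fun i _ => (le_abs_self _).trans ?_
  rw [abs_mul, abs_prod]
  refine mul_le_of_le_one_right (abs_nonneg _) <|
    prod_le_one (fun _ _ => abs_nonneg _) fun J hJ => (sq_le_one_iff_abs_le_one _).1 ?_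
  exact (single_le_sum (f := fun y => x J y ^ 2) (fun _ _ => sq_nonneg _) (mem_univ _)).trans
    (hx J hJ)

theorem tensorForm_le_normJ {x : BlockArrays n d} (hx : InUnitBalls P x) :
    tensorForm A P x ≤ normJ A P :=
  le_csSup ⟨∑ i, |A i|, by rintro _ ⟨x, hx, rfl⟩; exact tensorForm_le_sum_abs hx⟩ ⟨x, hx, rfl⟩

theorem normJ_le_of_forall {a : ℝ} (h : ∀ x, InUnitBalls P x → tensorForm A P x ≤ a) :
    normJ A P ≤ a :=
  csSup_le ⟨_, 0, fun J _ => by simp, rfl⟩ fun _ ⟨x, hx, hS⟩ => hS ▸ h x hx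

theorem normJ_nonneg (hP : P.parts.Nonempty) : 0 ≤ normJ A P := by
  refine le_of_eq_of_le ?_ (tensorForm_le_normJ (x := 0) fun J _ => by simp)
  obtain ⟨J, hJ⟩ := hP
  simp [tensorForm, prod_eq_zero hJ]

theorem tensorForm_sum {ι : Type*} (s : Finset ι) (F : ι → (Fin d → Fin n) → ℝ)
    (x : BlockArrays n d) :
    tensorForm (fun i => ∑ t ∈ s, F t i) P x = ∑ t ∈ s, tensorForm (F t) P x := by
  simp only [tensorForm, sum_mul]
  exact sum_comm

theorem tensorForm_smul_blocks (c : Finset (Fin d) → ℝ) (x : BlockArrays n d) :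
    tensorForm A P (fun J y => c J * x J y) = (∏ J ∈ P.parts, c J) * tensorForm A P x := by
  simp only [tensorForm, prod_mul_distrib, mul_sum]
  exact sum_congr rfl fun i _ => by ring

theorem tensorForm_mask (c : (J : Finset (Fin d)) → ({k : Fin d // k ∈ J} → Fin n) → Prop)
    [∀ J y, Decidable (c J y)] (x : BlockArrays n d) :
    tensorForm A P (fun J y => if c J y then x J y else 0) =
      tensorForm (fun i => if ∀ J ∈ P.parts, c J (fun k => i k.1) then A i else 0) P x := by
  simp only [tensorForm, prod_ite_zero]
  exact sum_congr rfl fun i _ => by split_ifs <;> simp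

theorem normJ_sum_le {ι : Type*} (s : Finset ι) (F : ι → (Fin d → Fin n) → ℝ) :
    normJ (fun i => ∑ t ∈ s, F t i) P ≤ ∑ t ∈ s, normJ (F t) P :=
  normJ_le_of_forall fun x hx => (tensorForm_sum s F x).trans_le <|
    sum_le_sum fun _ _ => tensorForm_le_normJ hx

theorem normJ_neg_le (hP : P.parts.Nonempty) : normJ (fun i => -A i) P ≤ normJ A P := by
  classical
  obtain ⟨J₀, hJ₀⟩ := hP
  refine normJ_le_of_forall fun x hx => ?_
  let c : Finset (Fin d) → ℝ := fun J => if J = J₀ then -1 else 1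
  have hc : ∏ J ∈ P.parts, c J = -1 := by simp [c, prod_ite_eq' P.parts J₀, hJ₀]
  have hunit : InUnitBalls P (fun J y => c J * x J y) := fun J hJ => by
    simpa [c, mul_pow, apply_ite (· ^ 2)] using hx J hJ
  calc tensorForm (fun i => -A i) P x = tensorForm A P (fun J y => c J * x J y) := by
        rw [tensorForm_smul_blocks, hc, neg_one_mul]
        simp [tensorForm]
    _ ≤ normJ A P := tensorForm_le_normJ hunit

theorem normJ_neg_one_pow_mul_le (hP : P.parts.Nonempty) (m : ℕ) :
    normJ (fun i => (-1) ^ m * A i) P ≤ normJ A P := by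
  rcases Nat.even_or_odd m with hm | hm
  · simp [hm.neg_one_pow]
  · simpa [hm.neg_one_pow] using normJ_neg_le hP

theorem InUnitBalls.mask {x : BlockArrays n d} (hx : InUnitBalls P x)
    (c : (J : Finset (Fin d)) → ({k : Fin d // k ∈ J} → Fin n) → Prop)
    [∀ J y, Decidable (c J y)] : InUnitBalls P (fun J y => if c J y then x J y else 0) :=
  fun J hJ => (sum_le_sum fun y _ => by dsimp only; split_ifs <;> simp [sq_nonneg]).trans (hx J hJ)

theorem tensorForm_le_normJ_mul_prod (x : BlockArrays n d) :
    tensorForm A P x ≤ normJ A P * ∏ J ∈ P.parts, √(∑ y, x J y ^ 2) := by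
  by_cases h0 : ∃ J ∈ P.parts, ∑ y, x J y ^ 2 = 0
  · obtain ⟨J, hJ, hzero⟩ := h0
    have hxJ : ∀ y, x J y = 0 := fun y => pow_eq_zero_iff two_ne_zero |>.1 <|
      (sum_eq_zero_iff_of_nonneg fun _ _ => sq_nonneg _).1 hzero y (mem_univ y)
    have hform : tensorForm A P x = 0 :=
      sum_eq_zero fun i _ => by rw [prod_eq_zero hJ (hxJ _), mul_zero]
    rw [hform, prod_eq_zero hJ (by rw [hzero, Real.sqrt_zero]), mul_zero]
  push Not at h0
  set r : Finset (Fin d) → ℝ := fun J => √(∑ y, x J y ^ 2)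
  have hr : ∀ J ∈ P.parts, 0 < r J := fun J hJ =>
    Real.sqrt_pos.2 ((sum_nonneg fun _ _ => sq_nonneg _).lt_of_ne (h0 J hJ).symm)
  have hunit : InUnitBalls P (fun J y => (r J)⁻¹ * x J y) := fun J hJ => by
    simp_rw [mul_pow, ← mul_sum, inv_pow, r, Real.sq_sqrt (sum_nonneg fun _ _ => sq_nonneg _)]
    rw [inv_mul_cancel₀ (h0 J hJ)]
  have hprod : ∏ J ∈ P.parts, r J ≠ 0 := prod_ne_zero_iff.2 fun J hJ => (hr J hJ).ne'
  calc tensorForm A P x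
      = (∏ J ∈ P.parts, r J) * tensorForm A P (fun J y => (r J)⁻¹ * x J y) := by
        rw [tensorForm_smul_blocks, prod_inv_distrib, mul_inv_cancel_left₀ hprod]
    _ ≤ (∏ J ∈ P.parts, r J) * normJ A P :=
        mul_le_mul_of_nonneg_left (tensorForm_le_normJ hunit) (prod_nonneg fun J hJ => (hr J hJ).le)
    _ = _ := mul_comm _ _

theorem normJ_ite_eq_le_of_part_eq {k l : Fin d} (hkl : P.part k = P.part l) :
    normJ (fun i => if i k = i l then A i else 0) P ≤ normJ A P := by
  classical
  refine normJ_le_of_forall fun x hx => ?_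
  let c : (J : Finset (Fin d)) → ({m : Fin d // m ∈ J} → Fin n) → Prop :=
    fun J y => ∀ (hk : k ∈ J) (hl : l ∈ J), y ⟨k, hk⟩ = y ⟨l, hl⟩
  have hc : ∀ i : Fin d → Fin n, (∀ J ∈ P.parts, c J (fun m => i m.1)) ↔ i k = i l :=
    fun i => ⟨fun h => h _ (P.part_mem.2 (mem_univ k)) (P.mem_part (mem_univ k))
      (hkl ▸ P.mem_part (mem_univ l)), fun h _ _ _ _ => h⟩
  calc tensorForm (fun i => if i k = i l then A i else 0) P x
      = tensorForm A P (fun J y => if c J y then x J y else 0) := by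
        rw [tensorForm_mask]; simp_rw [hc]
    _ ≤ normJ A P := tensorForm_le_normJ (hx.mask c)

theorem normJ_ite_eq_le_of_part_ne {k l : Fin d} (hkl : P.part k ≠ P.part l) :
    normJ (fun i => if i k = i l then A i else 0) P ≤ normJ A P := by
  classical
  have hk : P.part k ∈ P.parts := P.part_mem.2 (mem_univ k)
  have hl : P.part l ∈ P.parts := P.part_mem.2 (mem_univ l)
  have hA : 0 ≤ normJ A P := normJ_nonneg ⟨_, hk⟩
  refine normJ_le_of_forall fun x hx => ?_
  let c : Fin n → (J : Finset (Fin d)) → ({m : Fin d // m ∈ J} → Fin n) → Prop :=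
    fun a J y => (∀ h : k ∈ J, y ⟨k, h⟩ = a) ∧ ∀ h : l ∈ J, y ⟨l, h⟩ = a
  let xa : Fin n → BlockArrays n d := fun a J y => if c a J y then x J y else 0
  let s₁ : Fin n → ℝ := fun a => ∑ y, xa a (P.part k) y ^ 2
  let s₂ : Fin n → ℝ := fun a => ∑ y, xa a (P.part l) y ^ 2
  have hc : ∀ a (i : Fin d → Fin n), (∀ J ∈ P.parts, c a J (fun m => i m.1)) ↔ i k = a ∧ i l = a :=
    fun a i => by simp only [c, forall_and, P.forall_mem_parts_imp_iff (mem_univ _)]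
  have hsplit : tensorForm (fun i => if i k = i l then A i else 0) P x =
      ∑ a, tensorForm A P (xa a) := by
    calc tensorForm (fun i => if i k = i l then A i else 0) P x
        = tensorForm (fun i => ∑ a, if i k = a ∧ i l = a then A i else 0) P x := by
          simp_rw [sum_ite_eq_and_eq]
      _ = ∑ a, tensorForm (fun i => if i k = a ∧ i l = a then A i else 0) P x :=
          tensorForm_sum _ _ _
      _ = ∑ a, tensorForm A P (xa a) := sum_congr rfl fun a _ => by
          rw [tensorForm_mask]; simp_rw [hc]
  have hblock : ∀ a, ∏ J ∈ P.parts, √(∑ y, xa a J y ^ 2) ≤ √(s₁ a) * √(s₂ a) := fun a =>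
    prod_le_mul_of_le_one hk hl hkl (fun _ _ => Real.sqrt_nonneg _)
      fun J hJ => Real.sqrt_le_one.2 ((hx.mask (c a)) J hJ)
  have hs₁ : ∑ a, s₁ a ≤ 1 := (sum_sum_sq_ite_le (fun a => c a (P.part k))
    (fun y => y ⟨k, P.mem_part (mem_univ k)⟩) (fun _ _ h => h.1 _) _).trans (hx _ hk)
  have hs₂ : ∑ a, s₂ a ≤ 1 := (sum_sum_sq_ite_le (fun a => c a (P.part l))
    (fun y => y ⟨l, P.mem_part (mem_univ l)⟩) (fun _ _ h => h.2 _) _).trans (hx _ hl)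
  calc tensorForm (fun i => if i k = i l then A i else 0) P x
      = ∑ a, tensorForm A P (xa a) := hsplit
    _ ≤ ∑ a, normJ A P * (√(s₁ a) * √(s₂ a)) := sum_le_sum fun a _ =>
        (tensorForm_le_normJ_mul_prod _).trans (mul_le_mul_of_nonneg_left (hblock a) hA)
    _ = normJ A P * ∑ a, √(s₁ a) * √(s₂ a) := (mul_sum _ _ _).symm
    _ ≤ normJ A P * (√(∑ a, s₁ a) * √(∑ a, s₂ a)) := by
        gcongr
        exact Real.sum_sqrt_mul_sqrt_le _ (fun _ => sum_nonneg fun _ _ => sq_nonneg _)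
          fun _ => sum_nonneg fun _ _ => sq_nonneg _
    _ ≤ normJ A P := mul_le_of_le_one_right hA <|
        mul_le_one₀ (Real.sqrt_le_one.2 hs₁) (Real.sqrt_nonneg _) (Real.sqrt_le_one.2 hs₂)

theorem normJ_ite_eq_le (k l : Fin d) :
    normJ (fun i => if i k = i l then A i else 0) P ≤ normJ A P := by
  by_cases hkl : P.part k = P.part l
  · exact normJ_ite_eq_le_of_part_eq hkl
  · exact normJ_ite_eq_le_of_part_ne hkl

variable (A P) in
theorem normJ_ite_forall_mem_le (s : Finset (Fin d × Fin d)) :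
    normJ (fun i => if ∀ p ∈ s, i p.1 = i p.2 then A i else 0) P ≤ normJ A P := by
  classical
  induction s using Finset.induction with
  | empty => simp
  | insert q s _ ih =>
    calc normJ (fun i => if ∀ p ∈ insert q s, i p.1 = i p.2 then A i else 0) P
        = normJ (fun i => if i q.1 = i q.2 then
            (if ∀ p ∈ s, i p.1 = i p.2 then A i else 0) else 0) P := by
          simp only [forall_mem_insert, ite_and]
      _ ≤ normJ A P := (normJ_ite_eq_le _ _).trans ih

open Classical in
variable (A P) in
theorem normJ_ite_forall_rel_le (r : Fin d → Fin d → Prop) :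
    normJ (fun i => if ∀ k l, r k l → i k = i l then A i else 0) P ≤ normJ A P := by
  convert normJ_ite_forall_mem_le A P {p | r p.1 p.2} using 4 with i
  simp

end

/-- For a partition `𝒦` of `[d]`, let `L(𝒦)` be the set of indices `i ∈ [n]^d` whose
partition into level sets is exactly `𝒦` (i.e. `i_k = i_l` iff `k, l` lie in the same
block of `𝒦`). Then `‖A ∘ 1_{L(𝒦)}‖_𝒥 ≤ 2^{#𝒦(#𝒦-1)/2} ‖A‖_𝒥`. -/
theorem stmt2 (n d : ℕ) (A : (Fin d → Fin n) → ℝ)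
    (K P : Finpartition (Finset.univ : Finset (Fin d))) :
    normJ (fun i =>
        if ∀ k l : Fin d, i k = i l ↔ ∃ B ∈ K.parts, k ∈ B ∧ l ∈ B then A i else 0) P ≤
      2 ^ (K.parts.card * (K.parts.card - 1) / 2) * normJ A P := by
  classical
  rcases P.parts.eq_empty_or_nonempty with hP | hP
  · have hd : (univ : Finset (Fin d)) = ∅ := P.parts_eq_empty_iff.1 hP
    have : IsEmpty (Fin d) := univ_eq_empty_iff.1 hd
    simp [K.parts_eq_empty_iff.2 hd]
  calc normJ (fun i =>
        if ∀ k l : Fin d, i k = i l ↔ ∃ B ∈ K.parts, k ∈ B ∧ l ∈ B then A i else 0) P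
      = normJ (fun i => ∑ T ∈ (K.parts.powersetCard 2).powerset,
          (-1) ^ #T * if ∀ k l, K.LinkedBy T k l → i k = i l then A i else 0) P := by
        congr 1; funext i
        convert K.ite_levelSet_eq_sum_powerset i (A i)
    _ ≤ ∑ T ∈ (K.parts.powersetCard 2).powerset, normJ (fun i =>
          (-1) ^ #T * if ∀ k l, K.LinkedBy T k l → i k = i l then A i else 0) P :=
        normJ_sum_le _ _
    _ ≤ ∑ T ∈ (K.parts.powersetCard 2).powerset, normJ A P := sum_le_sum fun T _ =>
        (normJ_neg_one_pow_mul_le hP _).trans (normJ_ite_forall_rel_le A P _)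
    _ = 2 ^ (K.parts.card * (K.parts.card - 1) / 2) * normJ A P := by
        rw [sum_const, card_powerset, card_powersetCard, Nat.choose_two_right, nsmul_eq_mul]
        push_cast; rfl
end

section
/- Let $X$ be a random vector in $\mathbb{R}^n$ such that for some $L > 0$ and all $p \ge 2$ and all $\mathcal{C}^1$ functions $f:\mathbb{R}^n\to\mathbb{R}$ with $f(X), |\nabla f(X)| \in L^p$, one has $\|f(X) - \mathbb{E}f(X)\|_p \le L\sqrt{p}\,\||\nabla f(X)|\|_p$. Let $G$ be a standard Gaussian vector in $\mathbb{R}^n$ independent of $X$. Then there exists an absolute constant $C$ such that for all such $f$ and all $p \ge 2$, $\|f(X) - \mathbb{E}f(X)\|_p \le C L \|\langle \nabla f(X), G\rangle\|_p$, where the $L^p$ norm on the right is over the joint distribution of $(X,G)$. -/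
open MeasureTheory ProbabilityTheory

/-- `L^p` norm `‖Z‖_p = (𝔼 |Z|^p)^{1/p}` of a real random variable with respect to a
measure `μ`. -/
noncomputable def lpNorm {Ω : Type*} [MeasurableSpace Ω] (μ : Measure Ω) (p : ℝ)
    (Z : Ω → ℝ) : ℝ :=
  (∫ ω, |Z ω| ^ p ∂μ) ^ (1 / p)

/-- The `ψ_α` Orlicz norm `‖Z‖_{ψ_α} = inf{t > 0 : 𝔼 exp(|Z|^α / t^α) ≤ 2}`. -/
noncomputable def psiNorm {Ω : Type*} [MeasurableSpace Ω] (μ : Measure Ω) (α : ℝ)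
    (Z : Ω → ℝ) : ℝ :=
  sInf {t : ℝ | 0 < t ∧ ∫ ω, Real.exp (|Z ω| ^ α / t ^ α) ∂μ ≤ 2}

/-- The partial derivative `∂f/∂x_i` of `f : ℝⁿ → ℝ`. -/
noncomputable def pderivAt {n : ℕ} (f : (Fin n → ℝ) → ℝ) (i : Fin n)
    (x : Fin n → ℝ) : ℝ :=
  fderiv ℝ f x (Pi.single i 1)

/-- The Euclidean length `|∇f(x)|` of the gradient of `f : ℝⁿ → ℝ`. -/
noncomputable def gradNorm {n : ℕ} (f : (Fin n → ℝ) → ℝ) (x : Fin n → ℝ) : ℝ :=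
  Real.sqrt (∑ i, pderivAt f i x ^ 2)

/-!
Conditionally on `X`, the linear form `⟨∇f(X), G⟩` is a centred Gaussian with standard deviation
`|∇f(X)|`, so by Tonelli `‖⟨∇f(X), G⟩‖_p = ‖g‖_p ‖|∇f(X)|‖_p` for a standard Gaussian `g`.
For `p ≥ 2` the mass of `g` on `[√p, 2√p]` already gives `‖g‖_p ≥ √p / 16`, so the hypothesis yields
the claim with `C = 16`.
-/

open scoped ENNReal NNReal

lemma lintegral_abs_rpow_gaussianReal (v : ℝ≥0) (p : ℝ) :
    ∫⁻ x, ENNReal.ofReal (|x| ^ p) ∂gaussianReal 0 v =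
      ENNReal.ofReal (√v ^ p) * ∫⁻ x, ENNReal.ofReal (|x| ^ p) ∂gaussianReal 0 1 := by
  have hmap : (gaussianReal 0 1).map (√v * ·) = gaussianReal 0 v := by
    rw [gaussianReal_map_const_mul, mul_zero, mul_one]
    congr 1
    exact NNReal.eq (by simp)
  rw [← hmap, lintegral_map (by fun_prop) (measurable_const_mul _),
    ← lintegral_const_mul _ (by fun_prop)]
  congr 1 with x
  rw [← ENNReal.ofReal_mul (by positivity), abs_mul, abs_of_nonneg (Real.sqrt_nonneg _),
    Real.mul_rpow (Real.sqrt_nonneg _) (abs_nonneg _)]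

section GaussianLinearForms

variable {Ω : Type*} {mΩ : MeasurableSpace Ω} {P : Measure Ω} [IsProbabilityMeasure P]
  {ι : Type*} [Fintype ι]


lemma map_sum_eq_gaussianReal_of_iIndepFun {X : ι → Ω → ℝ} (hind : iIndepFun X P)
    {m : ι → ℝ} {v : ι → ℝ≥0} (hlaw : ∀ i, P.map (X i) = gaussianReal (m i) (v i)) :
    P.map (fun ω ↦ ∑ i, X i ω) = gaussianReal (∑ i, m i) (∑ i, v i) := by
  classical
  have hX i : AEMeasurable (X i) P :=
    .of_map_ne_zero (by simp [hlaw i, IsProbabilityMeasure.ne_zero])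
  suffices ∀ s : Finset ι, P.map (∑ i ∈ s, X i) = gaussianReal (∑ i ∈ s, m i) (∑ i ∈ s, v i) by
    simpa [Finset.sum_fn] using this Finset.univ
  intro s
  induction s using Finset.induction_on with
  | empty => simp [Pi.zero_def, gaussianReal_zero_var]
  | insert j s hj ih =>
    rw [Finset.sum_insert hj, Finset.sum_insert hj, Finset.sum_insert hj, add_comm (X j),
      add_comm (m j), add_comm (v j)]
    exact gaussianReal_add_gaussianReal_of_indepFun
      (hind.indepFun_finsetSum_of_notMem₀ hX hj) ih (hlaw j)

lemma map_sum_mul_eq_gaussianReal_of_iIndepFun {G : ι → Ω → ℝ} (hind : iIndepFun G P)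
    (hlaw : ∀ i, P.map (G i) = gaussianReal 0 1) (a : ι → ℝ) :
    P.map (fun ω ↦ ∑ i, a i * G i ω) = gaussianReal 0 (∑ i, ‖a i‖₊ ^ 2) := by
  have hG i : AEMeasurable (G i) P :=
    .of_map_ne_zero (by simp [hlaw i, IsProbabilityMeasure.ne_zero])
  simpa using map_sum_eq_gaussianReal_of_iIndepFun
    (hind.comp (fun i x ↦ a i * x) fun i ↦ measurable_const_mul (a i)) (m := fun _ ↦ 0)
    (v := fun i ↦ ‖a i‖₊ ^ 2) fun i ↦ by
      rw [← AEMeasurable.map_map_of_aemeasurable (measurable_const_mul (a i)).aemeasurable (hG i),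
        hlaw i, gaussianReal_map_const_mul, mul_zero, mul_one]
      congr 1
      exact NNReal.eq (by simp)

lemma lintegral_abs_rpow_sum_mul_gaussian {G : ι → Ω → ℝ} (hind : iIndepFun G P)
    (hlaw : ∀ i, P.map (G i) = gaussianReal 0 1) (a : ι → ℝ) (p : ℝ) :
    ∫⁻ ω, ENNReal.ofReal (|∑ i, a i * G i ω| ^ p) ∂P =
      ENNReal.ofReal (√(∑ i, a i ^ 2) ^ p) *
        ∫⁻ x, ENNReal.ofReal (|x| ^ p) ∂gaussianReal 0 1 := by
  have hsum : AEMeasurable (fun ω ↦ ∑ i, a i * G i ω) P := .of_map_ne_zero (by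
    simp [map_sum_mul_eq_gaussianReal_of_iIndepFun hind hlaw a, IsProbabilityMeasure.ne_zero])
  rw [← lintegral_map' (f := fun x ↦ ENNReal.ofReal (|x| ^ p)) (by fun_prop) hsum,
    map_sum_mul_eq_gaussianReal_of_iIndepFun hind hlaw, lintegral_abs_rpow_gaussianReal]
  simp

lemma lpNorm_prod_sum_mul_gaussian {Ω₀ : Type*} [MeasurableSpace Ω₀] (μ : Measure Ω₀)
    {a : Ω₀ → ι → ℝ} (ha : Measurable a) {G : ι → Ω → ℝ} (hG : ∀ i, Measurable (G i))
    (hind : iIndepFun G P) (hlaw : ∀ i, P.map (G i) = gaussianReal 0 1) (p : ℝ) :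
    lpNorm (μ.prod P) p (fun ω ↦ ∑ i, a ω.1 i * G i ω.2) =
      lpNorm (gaussianReal 0 1) p id * lpNorm μ p (fun ω ↦ √(∑ i, a ω i ^ 2)) := by
  have hZ : Measurable fun ω : Ω₀ × Ω ↦ ∑ i, a ω.1 i * G i ω.2 := by fun_prop
  have hfactor : ∫ ω, |∑ i, a ω.1 i * G i ω.2| ^ p ∂(μ.prod P) =
      (∫ x, |x| ^ p ∂gaussianReal 0 1) * ∫ ω, √(∑ i, a ω i ^ 2) ^ p ∂μ := by
    rw [integral_eq_lintegral_of_nonneg_ae (ae_of_all _ fun _ ↦ by positivity)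
        (hZ.abs.pow_const p).aestronglyMeasurable,
      integral_eq_lintegral_of_nonneg_ae (ae_of_all _ fun _ ↦ by positivity)
        (by fun_prop : Measurable fun x : ℝ ↦ |x| ^ p).aestronglyMeasurable,
      integral_eq_lintegral_of_nonneg_ae (ae_of_all _ fun _ ↦ by positivity)
        (by fun_prop : Measurable fun ω ↦ √(∑ i, a ω i ^ 2) ^ p).aestronglyMeasurable,
      lintegral_prod _ (by fun_prop)]
    simp only [lintegral_abs_rpow_sum_mul_gaussian hind hlaw]
    rw [lintegral_mul_const _ (by fun_prop), ENNReal.toReal_mul, mul_comm]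
  simp only [_root_.lpNorm, id, abs_of_nonneg (Real.sqrt_nonneg _), hfactor]
  exact Real.mul_rpow (integral_nonneg fun _ ↦ by positivity)
    (integral_nonneg fun _ ↦ by positivity)

end GaussianLinearForms

lemma sqrt_two_pi_mul_exp_two_mul_le {p : ℝ} (hp : 2 ≤ p) :
    √(2 * Real.pi) * Real.exp (2 * p) ≤ 16 ^ p := by
  have hpi : √(2 * Real.pi) ≤ 2 ^ p :=
    calc √(2 * Real.pi) ≤ 2 ^ (2 : ℝ) := by
          rw [Real.sqrt_le_left (by positivity)]
          norm_num
          nlinarith [Real.pi_lt_four]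
      _ ≤ 2 ^ p := Real.rpow_le_rpow_of_exponent_le (by norm_num) hp
  have hexp : Real.exp (2 * p) ≤ 8 ^ p := by
    rw [Real.exp_mul]
    refine Real.rpow_le_rpow (by positivity) ?_ (by linarith)
    have := Real.exp_one_lt_d9
    rw [show (2 : ℝ) = 1 + 1 by norm_num, Real.exp_add]
    nlinarith [Real.exp_pos 1]
  calc √(2 * Real.pi) * Real.exp (2 * p) ≤ 2 ^ p * 8 ^ p := by gcongr
    _ = 16 ^ p := by rw [← Real.mul_rpow (by norm_num) (by norm_num)]; norm_num

lemma gaussianPDFReal_antitoneOn : AntitoneOn (gaussianPDFReal 0 1) (Set.Ici 0) := by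
  intro x hx y hy hxy
  simp only [gaussianPDFReal, sub_zero]
  gcongr

lemma ofReal_mul_gaussianPDFReal_le_gaussianReal_Icc {a b : ℝ} (ha : 0 ≤ a) (hab : a ≤ b) :
    ENNReal.ofReal ((b - a) * gaussianPDFReal 0 1 b) ≤ gaussianReal 0 1 (Set.Icc a b) :=
  calc ENNReal.ofReal ((b - a) * gaussianPDFReal 0 1 b)
      = ∫⁻ _ in Set.Icc a b, ENNReal.ofReal (gaussianPDFReal 0 1 b) := by
        rw [setLIntegral_const, Real.volume_Icc, mul_comm,
          ENNReal.ofReal_mul (gaussianPDFReal_nonneg _ _ _)]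
    _ ≤ ∫⁻ x in Set.Icc a b, gaussianPDF 0 1 x :=
        setLIntegral_mono (measurable_gaussianPDF 0 1) fun x hx ↦ ENNReal.ofReal_le_ofReal <|
          gaussianPDFReal_antitoneOn (ha.trans hx.1) (ha.trans hab) hx.2
    _ = gaussianReal 0 1 (Set.Icc a b) := (gaussianReal_apply 0 one_ne_zero _).symm

lemma ofReal_rpow_mul_measure_Ici_le_lintegral {μ : Measure ℝ} {a p : ℝ} (ha : 0 ≤ a)
    (hp : 0 ≤ p) :
    ENNReal.ofReal (a ^ p) * μ (Set.Ici a) ≤ ∫⁻ x, ENNReal.ofReal (|x| ^ p) ∂μ :=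
  (mul_le_mul_right (measure_mono fun x (hx : a ≤ x) ↦ ENNReal.ofReal_le_ofReal <|
      Real.rpow_le_rpow ha (hx.trans (le_abs_self x)) hp) _).trans
    (mul_meas_ge_le_lintegral₀ (f := fun x ↦ ENNReal.ofReal (|x| ^ p)) (by fun_prop) _)

lemma integrable_abs_rpow_gaussianReal {p : ℝ} (hp : 0 < p) :
    Integrable (fun x ↦ |x| ^ p) (gaussianReal 0 1) := by
  simpa [ENNReal.toReal_ofReal hp.le] using
    (memLp_id_gaussianReal' (ENNReal.ofReal p) ENNReal.ofReal_ne_top).integrable_norm_rpow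
      (by simpa using hp) ENNReal.ofReal_ne_top

lemma rpow_le_integral_abs_rpow_gaussianReal {p : ℝ} (hp : 2 ≤ p) :
    (√p / 16) ^ p ≤ ∫ x, |x| ^ p ∂gaussianReal 0 1 := by
  set a := √p with ha_def
  have hp0 : 0 < p := by linarith
  have ha1 : 1 ≤ a := Real.one_le_sqrt.mpr (by linarith)
  have ha0 : 0 ≤ a := by linarith
  have hdensity : gaussianPDFReal 0 1 (2 * a) = (√(2 * Real.pi))⁻¹ * Real.exp (-(2 * p)) := by
    simp only [gaussianPDFReal, sub_zero, NNReal.coe_one, mul_one, mul_pow, ha_def,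
      Real.sq_sqrt hp0.le]
    ring_nf
  have hnum : (a / 16) ^ p ≤ a ^ p * ((2 * a - a) * gaussianPDFReal 0 1 (2 * a)) := by
    rw [Real.div_rpow ha0 (by norm_num), hdensity, div_eq_mul_inv]
    gcongr
    rw [Real.exp_neg, ← mul_inv, le_mul_inv_iff₀ (by positivity), inv_mul_le_iff₀ (by positivity)]
    nlinarith [sqrt_two_pi_mul_exp_two_mul_le hp,
      Real.rpow_pos_of_pos (by norm_num : (0 : ℝ) < 16) p]
  rw [← ENNReal.ofReal_le_ofReal_iff (integral_nonneg fun _ ↦ by positivity),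
    ofReal_integral_eq_lintegral_ofReal (integrable_abs_rpow_gaussianReal hp0)
      (ae_of_all _ fun _ ↦ by positivity)]
  calc ENNReal.ofReal ((a / 16) ^ p)
      ≤ ENNReal.ofReal (a ^ p) * ENNReal.ofReal ((2 * a - a) * gaussianPDFReal 0 1 (2 * a)) := by
        rw [← ENNReal.ofReal_mul (by positivity)]
        exact ENNReal.ofReal_le_ofReal hnum
    _ ≤ ENNReal.ofReal (a ^ p) * gaussianReal 0 1 (Set.Icc a (2 * a)) := by
        gcongr
        exact ofReal_mul_gaussianPDFReal_le_gaussianReal_Icc ha0 (by linarith)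
    _ ≤ ENNReal.ofReal (a ^ p) * gaussianReal 0 1 (Set.Ici a) := by
        gcongr
        exact Set.Icc_subset_Ici_self
    _ ≤ ∫⁻ x, ENNReal.ofReal (|x| ^ p) ∂gaussianReal 0 1 :=
        ofReal_rpow_mul_measure_Ici_le_lintegral ha0 hp0.le

lemma continuous_pderivAt {n : ℕ} {f : (Fin n → ℝ) → ℝ} (hf : ContDiff ℝ 1 f) (i : Fin n) :
    Continuous (pderivAt f i) :=
  (hf.continuous_fderiv one_ne_zero).clm_apply continuous_const

lemma lpNorm_nonneg {Ω : Type*} [MeasurableSpace Ω] (μ : Measure Ω) (p : ℝ) (Z : Ω → ℝ) :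
    0 ≤ lpNorm μ p Z :=
  Real.rpow_nonneg (integral_nonneg fun _ ↦ by positivity) _

lemma sqrt_div_le_lpNorm_gaussianReal {p : ℝ} (hp : 2 ≤ p) :
    √p / 16 ≤ lpNorm (gaussianReal 0 1) p id := by
  have hp0 : p ≠ 0 := by positivity
  calc √p / 16 = ((√p / 16) ^ p) ^ (1 / p) := by
        rw [one_div, Real.rpow_rpow_inv (by positivity) hp0]
    _ ≤ lpNorm (gaussianReal 0 1) p id :=
        Real.rpow_le_rpow (by positivity) (rpow_le_integral_abs_rpow_gaussianReal hp)
          (by positivity)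

/-- Linearisation of a Sobolev-type inequality by an independent standard Gaussian
vector: if `X` satisfies `‖f(X) - 𝔼f(X)‖_p ≤ L √p ‖|∇f(X)|‖_p` for all `p ≥ 2` and all
`C¹` functions `f` with `f(X), |∇f(X)| ∈ L^p`, then for an absolute constant `C`, for
all such `f` and `p ≥ 2`, `‖f(X) - 𝔼f(X)‖_p ≤ C L ‖⟨∇f(X), G⟩‖_p`, the norm on the
right being over the joint distribution of `(X, G)`. -/
theorem stmt7 :
    ∃ C : ℝ, 0 < C ∧
      ∀ (n : ℕ) (Ω : Type) (_ : MeasurableSpace Ω) (μ : Measure Ω)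
        (_ : IsProbabilityMeasure μ)
        (Ω' : Type) (_ : MeasurableSpace Ω') (μ' : Measure Ω')
        (_ : IsProbabilityMeasure μ')
        (X : Ω → Fin n → ℝ) (G : Fin n → Ω' → ℝ) (L : ℝ), 0 < L →
        Measurable X →
        (∀ i, Measurable (G i)) →
        iIndepFun G μ' →
        (∀ i, Measure.map (G i) μ' = gaussianReal 0 1) →
        (∀ p : ℝ, 2 ≤ p → ∀ f : (Fin n → ℝ) → ℝ, ContDiff ℝ 1 f →
          MemLp (fun ω => f (X ω)) (ENNReal.ofReal p) μ →
          MemLp (fun ω => gradNorm f (X ω)) (ENNReal.ofReal p) μ →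
          lpNorm μ p (fun ω => f (X ω) - ∫ ω', f (X ω') ∂μ) ≤
            L * Real.sqrt p * lpNorm μ p (fun ω => gradNorm f (X ω))) →
        ∀ p : ℝ, 2 ≤ p → ∀ f : (Fin n → ℝ) → ℝ, ContDiff ℝ 1 f →
          MemLp (fun ω => f (X ω)) (ENNReal.ofReal p) μ →
          MemLp (fun ω => gradNorm f (X ω)) (ENNReal.ofReal p) μ →
          lpNorm μ p (fun ω => f (X ω) - ∫ ω', f (X ω') ∂μ) ≤
            C * L *
              lpNorm (μ.prod μ') p
                (fun ω => ∑ i, pderivAt f i (X ω.1) * G i ω.2) := by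
  refine ⟨16, by norm_num, ?_⟩
  intro n Ω _ μ _ Ω' _ μ' _ X G L hL hX hG hind hlaw hSobolev p hp f hf hfX hgradX
  have hgrad : Measurable fun ω i ↦ pderivAt f i (X ω) :=
    measurable_pi_lambda _ fun i ↦ (continuous_pderivAt hf i).measurable.comp hX
  calc lpNorm μ p (fun ω => f (X ω) - ∫ ω', f (X ω') ∂μ)
      ≤ L * √p * lpNorm μ p (fun ω => gradNorm f (X ω)) := hSobolev p hp f hf hfX hgradX
    _ ≤ L * (16 * lpNorm (gaussianReal 0 1) p id) * lpNorm μ p (fun ω => gradNorm f (X ω)) := by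
        gcongr
        · exact _root_.lpNorm_nonneg _ _ _
        · linarith [sqrt_div_le_lpNorm_gaussianReal hp]
    _ = 16 * L * lpNorm (μ.prod μ') p (fun ω => ∑ i, pderivAt f i (X ω.1) * G i ω.2) := by
        rw [lpNorm_prod_sum_mul_gaussian μ hgrad hG hind hlaw]
        simp only [gradNorm]
        ring
end

section
/- Let $\beta \ge 2$, $a, b \ge 0$, $g(\beta) \ge 0$, and suppose $G:[\beta,p]\to[0,\infty)$ is differentiable with $G(\beta) = g(\beta)^{\beta/2}$ and $G'(t) \le \frac{\beta}{2}\big(G(t)^{(\beta-2)/\beta} a + t^{\beta-2} b\big)$ for all $t \in [\beta,p]$. Then $G(p)^{2/\beta} \le g(\beta) + a(p-\beta) + b^{2/\beta} p^{2-2/\beta}$. -/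
/-!
Compare `G` with `B_ε = φ_ε ^ (β/2)`, where `φ_ε(t) = g + a (t - β) + b^{2/β} t^{2-2/β} + ε t`.
Since `φ_ε(t) ≥ b^{2/β} t^{2-2/β}` and `β/2 - 1 ≥ 0`, the identity
`(b^{2/β} t^{2-2/β})^{β/2-1} · b^{2/β} t^{1-2/β} = t^{β-2} b` shows that
`t^{β-2} b ≤ φ_ε^{β/2-1} · (b^{2/β} t^{2-2/β})'`. Hence wherever `G` touches `B_ε` from below,
`G' ≤ β/2 (B_ε^{(β-2)/β} a + t^{β-2} b) < B_ε'`, the strict inequality coming from the `ε t` term.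
The fencing theorem gives `G ≤ B_ε` on `[β, p]`, and `ε → 0` yields the bound.
-/

open Set Real

/-- The paper's `H_ε^{2/β}`, with the perturbation `ε t` in place of `ε` so that `H_ε` becomes a
strict supersolution. -/
noncomputable def comparisonFun (β a b g ε t : ℝ) : ℝ :=
  g + a * (t - β) + b ^ (2 / β) * t ^ (2 - 2 / β) + ε * t

section

variable {β a b g ε t : ℝ}

lemma comparisonFun_pos (hβ : 0 < β) (ha : 0 ≤ a) (hb : 0 ≤ b) (hg : 0 ≤ g) (hε : 0 < ε)
    (ht : β ≤ t) : 0 < comparisonFun β a b g ε t := by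
  have ht0 : 0 < t := hβ.trans_le ht
  have : 0 ≤ a * (t - β) := mul_nonneg ha (sub_nonneg.2 ht)
  unfold comparisonFun
  positivity

lemma hasDerivAt_comparisonFun (ht : 0 < t) :
    HasDerivAt (comparisonFun β a b g ε)
      (a + b ^ (2 / β) * ((2 - 2 / β) * t ^ (1 - 2 / β)) + ε) t := by
  have hpow : HasDerivAt (fun s : ℝ => s ^ (2 - 2 / β)) ((2 - 2 / β) * t ^ (1 - 2 / β)) t := by
    have := hasDerivAt_rpow_const (p := 2 - 2 / β) (Or.inl ht.ne')
    rwa [show 2 - 2 / β - 1 = 1 - 2 / β by ring] at this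
  have hlin : HasDerivAt (fun s : ℝ => g + a * (s - β)) a t := by
    simpa using (((hasDerivAt_id t).sub_const β).const_mul a).const_add g
  exact (hlin.add (hpow.const_mul (b ^ (2 / β)))).add
    (by simpa using (hasDerivAt_id t).const_mul ε)

lemma rpow_sub_one_mul_eq_rpow_sub_two_mul (hβ : 0 < β) (hb : 0 ≤ b) (ht : 0 < t) :
    (b ^ (2 / β) * t ^ (2 - 2 / β)) ^ (β / 2 - 1) * (b ^ (2 / β) * t ^ (1 - 2 / β))
      = t ^ (β - 2) * b := by
  have hshift : b ^ (2 / β) * t ^ (1 - 2 / β) = b ^ (2 / β) * t ^ (2 - 2 / β) / t := by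
    rw [show (2 : ℝ) - 2 / β = (1 - 2 / β) + 1 by ring, rpow_add ht, rpow_one]
    field_simp
  set z := b ^ (2 / β) * t ^ (2 - 2 / β)
  have hz : 0 ≤ z := by positivity
  have hzβ : z ^ (β / 2) = b * t ^ (β - 1) := by
    rw [mul_rpow (by positivity) (by positivity), ← rpow_mul hb, ← rpow_mul ht.le,
      show 2 / β * (β / 2) = 1 by field_simp, show (2 - 2 / β) * (β / 2) = β - 1 by field_simp,
      rpow_one]
  rw [hshift, mul_div_assoc', ← rpow_add_one' hz (by rw [sub_add_cancel]; positivity),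
    sub_add_cancel, hzβ, show β - 1 = (β - 2) + 1 by ring, rpow_add ht, rpow_one]
  field_simp

lemma mul_le_rpow_mul_of_le {y : ℝ} (hβ : 2 ≤ β) (hb : 0 ≤ b) (ht : 0 < t)
    (hy : b ^ (2 / β) * t ^ (2 - 2 / β) ≤ y) :
    t ^ (β - 2) * b ≤ y ^ (β / 2 - 1) * (b ^ (2 / β) * ((2 - 2 / β) * t ^ (1 - 2 / β))) := by
  have hβ0 : 0 < β := by linarith
  have hcoef : 1 ≤ 2 - 2 / β := by
    have : 2 / β ≤ 1 := (div_le_one hβ0).2 hβ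
    linarith
  have hy0 : 0 ≤ y := le_trans (by positivity) hy
  calc t ^ (β - 2) * b
      = (b ^ (2 / β) * t ^ (2 - 2 / β)) ^ (β / 2 - 1) * (b ^ (2 / β) * t ^ (1 - 2 / β)) :=
        (rpow_sub_one_mul_eq_rpow_sub_two_mul hβ0 hb ht).symm
    _ ≤ y ^ (β / 2 - 1) * (b ^ (2 / β) * t ^ (1 - 2 / β)) := by
        gcongr
        linarith
    _ ≤ y ^ (β / 2 - 1) * (b ^ (2 / β) * ((2 - 2 / β) * t ^ (1 - 2 / β))) := by
        gcongr
        exact le_mul_of_one_le_left (by positivity) hcoef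

lemma lt_deriv_comparisonFun_rpow_of_eq {y y' : ℝ} (hβ : 2 ≤ β) (ha : 0 ≤ a) (hb : 0 ≤ b)
    (hg : 0 ≤ g) (hε : 0 < ε) (ht : β ≤ t) (hy : y = comparisonFun β a b g ε t ^ (β / 2))
    (hy' : y' ≤ β / 2 * (y ^ ((β - 2) / β) * a + t ^ (β - 2) * b)) :
    y' < (a + b ^ (2 / β) * ((2 - 2 / β) * t ^ (1 - 2 / β)) + ε) * (β / 2)
      * comparisonFun β a b g ε t ^ (β / 2 - 1) := by
  have hβ0 : 0 < β := by linarith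
  have ht0 : 0 < t := hβ0.trans_le ht
  have hφ := comparisonFun_pos hβ0 ha hb hg hε ht
  set φ := comparisonFun β a b g ε t with hφ_def
  have hyφ : y ^ ((β - 2) / β) = φ ^ (β / 2 - 1) := by
    rw [hy, ← rpow_mul hφ.le]
    congr 1
    field_simp
  have hdom : b ^ (2 / β) * t ^ (2 - 2 / β) ≤ φ := by
    have : 0 ≤ a * (t - β) := mul_nonneg ha (sub_nonneg.2 ht)
    have : 0 ≤ ε * t := by positivity
    rw [hφ_def, comparisonFun]
    linarith
  calc y' ≤ β / 2 * (φ ^ (β / 2 - 1) * a + t ^ (β - 2) * b) := hyφ ▸ hy'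
    _ ≤ β / 2 * (φ ^ (β / 2 - 1) * a
          + φ ^ (β / 2 - 1) * (b ^ (2 / β) * ((2 - 2 / β) * t ^ (1 - 2 / β)))) := by
        gcongr β / 2 * (_ + ?_)
        exact mul_le_rpow_mul_of_le hβ hb ht0 hdom
    _ = (a + b ^ (2 / β) * ((2 - 2 / β) * t ^ (1 - 2 / β)) + ε) * (β / 2) * φ ^ (β / 2 - 1)
          - β / 2 * ε * φ ^ (β / 2 - 1) := by ring
    _ < _ := sub_lt_self _ (by positivity)

lemma le_comparisonFun_rpow {G G' : ℝ → ℝ} {p : ℝ} (hβ : 2 ≤ β) (ha : 0 ≤ a) (hb : 0 ≤ b)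
    (hg : 0 ≤ g) (hε : 0 < ε) (hG0 : G β = g ^ (β / 2))
    (hderiv : ∀ t ∈ Icc β p, HasDerivAt G (G' t) t)
    (hbound : ∀ t ∈ Icc β p, G' t ≤ β / 2 * (G t ^ ((β - 2) / β) * a + t ^ (β - 2) * b)) :
    ∀ t ∈ Icc β p, G t ≤ comparisonFun β a b g ε t ^ (β / 2) := by
  have hβ0 : 0 < β := by linarith
  have hB : ∀ t ∈ Icc β p, HasDerivAt (fun s => comparisonFun β a b g ε s ^ (β / 2))
      ((a + b ^ (2 / β) * ((2 - 2 / β) * t ^ (1 - 2 / β)) + ε) * (β / 2)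
        * comparisonFun β a b g ε t ^ (β / 2 - 1)) t := fun t ht =>
    (hasDerivAt_comparisonFun (hβ0.trans_le ht.1)).rpow_const
      (Or.inl (comparisonFun_pos hβ0 ha hb hg hε ht.1).ne')
  have hstart : G β ≤ comparisonFun β a b g ε β ^ (β / 2) := by
    rw [hG0]
    refine rpow_le_rpow hg ?_ (by linarith)
    rw [comparisonFun, sub_self, mul_zero, add_zero]
    have : 0 ≤ b ^ (2 / β) * β ^ (2 - 2 / β) + ε * β := by positivity
    linarith
  exact image_le_of_deriv_right_lt_deriv_boundary'
    (fun t ht => (hderiv t ht).continuousAt.continuousWithinAt)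
    (fun t ht => (hderiv t (Ico_subset_Icc_self ht)).hasDerivWithinAt) hstart
    (fun t ht => (hB t ht).continuousAt.continuousWithinAt)
    (fun t ht => (hB t (Ico_subset_Icc_self ht)).hasDerivWithinAt)
    (fun t ht hGt => lt_deriv_comparisonFun_rpow_of_eq hβ ha hb hg hε ht.1 hGt
      (hbound t (Ico_subset_Icc_self ht)))

end

/-- ODE comparison lemma: if `β ≥ 2`, `a, b ≥ 0`, `G : [β, p] → [0, ∞)` is
differentiable with `G(β) = g(β)^{β/2}` and
`G'(t) ≤ (β/2)(G(t)^{(β-2)/β} a + t^{β-2} b)` on `[β, p]`, then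
`G(p)^{2/β} ≤ g(β) + a(p-β) + b^{2/β} p^{2-2/β}`. -/
theorem stmt9 (β p a b gβ : ℝ) (G G' : ℝ → ℝ)
    (hβ : 2 ≤ β) (hp : β ≤ p) (ha : 0 ≤ a) (hb : 0 ≤ b) (hgβ : 0 ≤ gβ)
    (hG0 : G β = gβ ^ (β / 2))
    (hGnonneg : ∀ t ∈ Set.Icc β p, 0 ≤ G t)
    (hderiv : ∀ t ∈ Set.Icc β p, HasDerivAt G (G' t) t)
    (hbound : ∀ t ∈ Set.Icc β p,
      G' t ≤ β / 2 * (G t ^ ((β - 2) / β) * a + t ^ (β - 2) * b)) :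
    G p ^ (2 / β) ≤ gβ + a * (p - β) + b ^ (2 / β) * p ^ (2 - 2 / β) := by
  have hβ0 : 0 < β := by linarith
  have hp0 : 0 < p := hβ0.trans_le hp
  refine le_of_forall_pos_le_add fun δ hδ => ?_
  have hε : 0 < δ / p := div_pos hδ hp0
  have hφ := comparisonFun_pos hβ0 ha hb hgβ hε hp
  have hGp := le_comparisonFun_rpow hβ ha hb hgβ hε hG0 hderiv hbound p (right_mem_Icc.2 hp)
  calc G p ^ (2 / β) ≤ (comparisonFun β a b gβ (δ / p) p ^ (β / 2)) ^ (2 / β) :=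
        rpow_le_rpow (hGnonneg p (right_mem_Icc.2 hp)) hGp (by positivity)
    _ = comparisonFun β a b gβ (δ / p) p := by
        rw [← inv_div β 2, rpow_rpow_inv hφ.le (by positivity)]
    _ = gβ + a * (p - β) + b ^ (2 / β) * p ^ (2 - 2 / β) + δ := by
        rw [comparisonFun, div_mul_cancel₀ δ hp0.ne']
end

section
/- Let $n \ge 3$ and let unit vectors $x = (x_e)$, $y = (y_e)$, $z = (z_e)$ in $\mathbb{R}^{\binom{[n]}{2}}$ (indexed by two-element subsets of $[n]$) be given, each of Euclidean norm at most 1. Then $\sum_{(i_1,i_2,i_3) \in [n]^{\underline{3}}} x_{\{i_1,i_2\}}\, y_{\{i_2,i_3\}}\, z_{\{i_1,i_3\}} \le 2^{3/2}$, where $[n]^{\underline{3}}$ is the set of triples of pairwise distinct indices in $[n]$. -/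
/-!
Extend each edge weighting `x` to the symmetric zero-diagonal matrix `X i j = x {i, j}`, whose
squared Frobenius norm is `2 ∑ₑ xₑ² ≤ 2`. The triangle sum is `∑_{i,j} X i j ∑ₖ Y j k Z i k`, and
Cauchy–Schwarz over `(i, j)`, then over `k`, bounds its square by `‖X‖² ‖Y‖² ‖Z‖² ≤ 8`.
-/

open Finset

section PairSum

variable {α : Type*} [Fintype α] [DecidableEq α]

lemma card_filter_offDiag_pair_eq_two {a b : α} (hab : a ≠ b) :
    #{p ∈ (univ : Finset α).offDiag | ({p.1, p.2} : Finset α) = {a, b}} = 2 := by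
  have : {p ∈ (univ : Finset α).offDiag | ({p.1, p.2} : Finset α) = {a, b}} = {(a, b), (b, a)} := by
    ext ⟨i, j⟩
    simp only [mem_filter, mem_offDiag, mem_univ, true_and, mem_insert, mem_singleton,
      Prod.mk.injEq, ← coe_inj, coe_pair, Set.pair_eq_pair_iff]
    constructor
    · rintro ⟨-, h⟩; exact h
    · rintro (⟨rfl, rfl⟩ | ⟨rfl, rfl⟩) <;> simp [hab, Ne.symm hab]
  rw [this, card_pair (by simp [hab])]

lemma sum_ite_ne_pair_eq_two_nsmul {M : Type*} [AddCommMonoid M] (f : Finset α → M) :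
    ∑ i, ∑ j, (if i ≠ j then f {i, j} else 0) = 2 • ∑ e ∈ univ.powersetCard 2, f e := by
  have hmaps : ∀ p ∈ (univ : Finset α).offDiag, ({p.1, p.2} : Finset α) ∈ univ.powersetCard 2 :=
    fun p hp ↦ mem_powersetCard.2 ⟨subset_univ _, card_pair (mem_offDiag.1 hp).2.2⟩
  calc ∑ i, ∑ j, (if i ≠ j then f {i, j} else 0)
      = ∑ p ∈ (univ : Finset α).offDiag, f {p.1, p.2} := by
        rw [← Fintype.sum_prod_type' (fun i j ↦ if i ≠ j then f {i, j} else 0), ← sum_filter]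
        congr 1
        ext; simp
    _ = ∑ e ∈ univ.powersetCard 2, 2 • f e := by
        rw [← sum_fiberwise_of_maps_to' hmaps]
        refine sum_congr rfl fun e he ↦ ?_
        obtain ⟨a, b, hab, rfl⟩ := card_eq_two.1 (mem_powersetCard.1 he).2
        rw [sum_const, card_filter_offDiag_pair_eq_two hab]
    _ = 2 • ∑ e ∈ univ.powersetCard 2, f e := (smul_sum ..).symm

end PairSum

section TraceForm

variable {ι : Type*} [Fintype ι]

theorem sq_sum_mul_sum_mul_le (A B C : ι → ι → ℝ) :
    (∑ i, ∑ j, A i j * ∑ k, B j k * C i k) ^ 2 ≤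
      (∑ i, ∑ j, A i j ^ 2) * (∑ i, ∑ j, B i j ^ 2) * (∑ i, ∑ j, C i j ^ 2) := by
  calc (∑ i, ∑ j, A i j * ∑ k, B j k * C i k) ^ 2
      = (∑ p : ι × ι, A p.1 p.2 * ∑ k, B p.2 k * C p.1 k) ^ 2 := by
        rw [Fintype.sum_prod_type]
    _ ≤ (∑ p : ι × ι, A p.1 p.2 ^ 2) * ∑ p : ι × ι, (∑ k, B p.2 k * C p.1 k) ^ 2 :=
        sum_mul_sq_le_sq_mul_sq _ _ _
    _ ≤ (∑ i, ∑ j, A i j ^ 2) * ∑ i, ∑ j, (∑ k, B j k ^ 2) * ∑ k, C i k ^ 2 := by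
        simp only [Fintype.sum_prod_type]
        gcongr with i _ j _
        exact sum_mul_sq_le_sq_mul_sq _ _ _
    _ = (∑ i, ∑ j, A i j ^ 2) * (∑ i, ∑ j, B i j ^ 2) * (∑ i, ∑ j, C i j ^ 2) := by
        rw [mul_assoc]
        simp only [← sum_mul, ← mul_sum]

end TraceForm

section EdgeMatrix

variable {α : Type*} [DecidableEq α]

def edgeMatrix (x : Finset α → ℝ) (i j : α) : ℝ :=
  if i ≠ j then x {i, j} else 0

theorem sum_sum_edgeMatrix_sq [Fintype α] (x : Finset α → ℝ) :
    ∑ i, ∑ j, edgeMatrix x i j ^ 2 = 2 * ∑ e ∈ univ.powersetCard 2, x e ^ 2 := by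
  simp only [edgeMatrix, ite_pow, zero_pow two_ne_zero]
  rw [sum_ite_ne_pair_eq_two_nsmul (fun e ↦ x e ^ 2), two_nsmul, two_mul]

theorem ite_distinct_eq_edgeMatrix_mul (x y z : Finset α → ℝ) (i₁ i₂ i₃ : α) :
    (if i₁ ≠ i₂ ∧ i₁ ≠ i₃ ∧ i₂ ≠ i₃ then x {i₁, i₂} * y {i₂, i₃} * z {i₁, i₃} else 0) =
      edgeMatrix x i₁ i₂ * (edgeMatrix y i₂ i₃ * edgeMatrix z i₁ i₃) := by
  unfold edgeMatrix
  split_ifs <;> simp_all [mul_assoc]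

end EdgeMatrix

theorem stmt13_general (n : ℕ) (x y z : Finset (Fin n) → ℝ)
    (hx : ∑ e ∈ Finset.univ.powersetCard 2, x e ^ 2 ≤ 1)
    (hy : ∑ e ∈ Finset.univ.powersetCard 2, y e ^ 2 ≤ 1)
    (hz : ∑ e ∈ Finset.univ.powersetCard 2, z e ^ 2 ≤ 1) :
    ∑ i₁ : Fin n, ∑ i₂ : Fin n, ∑ i₃ : Fin n,
        (if i₁ ≠ i₂ ∧ i₁ ≠ i₃ ∧ i₂ ≠ i₃ then
          x {i₁, i₂} * y {i₂, i₃} * z {i₁, i₃} else 0) ≤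
      2 * Real.sqrt 2 := by
  simp only [ite_distinct_eq_edgeMatrix_mul, ← mul_sum]
  have hsq := sq_sum_mul_sum_mul_le (edgeMatrix x) (edgeMatrix y) (edgeMatrix z)
  simp only [sum_sum_edgeMatrix_sq] at hsq
  refine (le_abs_self _).trans (abs_le_of_sq_le_sq ?_ (by positivity))
  calc _ ≤ _ := hsq
    _ ≤ (2 * 1) * (2 * 1) * (2 * 1) := by gcongr
    _ = (2 * Real.sqrt 2) ^ 2 := by rw [mul_pow, Real.sq_sqrt zero_le_two]; norm_num

/-- The `{1}{2}{3}` injective tensor norm bound for the third derivative of the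
triangle-counting polynomial: if `x, y, z` are arrays indexed by the two-element
subsets of `[n]`, each of Euclidean norm at most `1`, then
`∑_{(i₁,i₂,i₃) distinct} x_{\{i₁,i₂\}} y_{\{i₂,i₃\}} z_{\{i₁,i₃\}} ≤ 2^{3/2}`. -/
theorem stmt13 (n : ℕ) (hn : 3 ≤ n) (x y z : Finset (Fin n) → ℝ)
    (hx : ∑ e ∈ Finset.univ.powersetCard 2, x e ^ 2 ≤ 1)
    (hy : ∑ e ∈ Finset.univ.powersetCard 2, y e ^ 2 ≤ 1)
    (hz : ∑ e ∈ Finset.univ.powersetCard 2, z e ^ 2 ≤ 1) :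
    ∑ i₁ : Fin n, ∑ i₂ : Fin n, ∑ i₃ : Fin n,
        (if i₁ ≠ i₂ ∧ i₁ ≠ i₃ ∧ i₂ ≠ i₃ then
          x {i₁, i₂} * y {i₂, i₃} * z {i₁, i₃} else 0) ≤
      2 * Real.sqrt 2 :=
  stmt13_general n x y z hx hy hz
end

section
/- Let $n \ge 3$ and let $(y_{e_2,e_3})$ be a real array indexed by pairs of two-element subsets of $[n]$ with $\sum_{e_2,e_3} y_{e_2,e_3}^2 \le 1$, and let $(x_{e_1})$ be a real vector indexed by two-element subsets of $[n]$ with $\sum_{e_1} x_{e_1}^2 \le 1$. Then $\sum_{e_1,e_2,e_3} \mathbf{1}\{e_1,e_2,e_3 \text{ form a triangle}\}\, x_{e_1} y_{e_2,e_3} \le \sqrt{2(n-2)}$, where three edges form a triangle if their union has exactly 3 vertices and they are pairwise distinct. -/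
/-!
By Cauchy–Schwarz over the set of triangles, the square of the sum is at most
`(∑_{e₁} deg e₁ · x_{e₁}²) (∑_{e₂,e₃} deg (e₂, e₃) · y_{e₂e₃}²)`. An edge `{a, b}` is completed
to a triangle exactly by the `2(n - 2)` ordered pairs `({a, c}, {b, c})`, `({b, c}, {a, c})`,
while an ordered pair `(e₂, e₃)` completes to at most one triangle, with `e₁ = e₂ ∆ e₃`.
-/

open Finset

section SchurTest

variable {ι κ : Type*} (s : Finset ι) (t : Finset κ) (r : ι → κ → Prop) [∀ i j, Decidable (r i j)]

lemma sum_filter_product_fst (F : ι → ℝ) :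
    ∑ p ∈ (s ×ˢ t).filter (fun p => r p.1 p.2), F p.1 = ∑ i ∈ s, #{j ∈ t | r i j} * F i := by
  rw [sum_filter, sum_product]
  refine sum_congr rfl fun i _ => ?_
  simp only
  rw [← sum_filter, sum_const, nsmul_eq_mul]

lemma sum_filter_product_snd (G : κ → ℝ) :
    ∑ p ∈ (s ×ˢ t).filter (fun p => r p.1 p.2), G p.2 = ∑ j ∈ t, #{i ∈ s | r i j} * G j := by
  rw [sum_filter, sum_product_right]
  refine sum_congr rfl fun j _ => ?_
  simp only
  rw [← sum_filter, sum_const, nsmul_eq_mul]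

/-- Schur test for a 0/1 kernel. -/
theorem sq_sum_sum_ite_mul_le_of_card_filter_le (f : ι → ℝ) (g : κ → ℝ) {K L : ℝ}
    (hK : ∀ i ∈ s, (#{j ∈ t | r i j} : ℝ) ≤ K) (hL : ∀ j ∈ t, (#{i ∈ s | r i j} : ℝ) ≤ L) :
    (∑ i ∈ s, ∑ j ∈ t, if r i j then f i * g j else 0) ^ 2 ≤
      (K * ∑ i ∈ s, f i ^ 2) * (L * ∑ j ∈ t, g j ^ 2) := by
  set R := (s ×ˢ t).filter (fun p => r p.1 p.2)
  have hsum : (∑ i ∈ s, ∑ j ∈ t, if r i j then f i * g j else 0) = ∑ p ∈ R, f p.1 * g p.2 := by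
    rw [sum_filter, sum_product]
  have hf : ∑ p ∈ R, f p.1 ^ 2 ≤ K * ∑ i ∈ s, f i ^ 2 := by
    rw [sum_filter_product_fst s t r (f · ^ 2), mul_sum]
    exact sum_le_sum fun i hi => mul_le_mul_of_nonneg_right (hK i hi) (sq_nonneg _)
  have hg : ∑ p ∈ R, g p.2 ^ 2 ≤ L * ∑ j ∈ t, g j ^ 2 := by
    rw [sum_filter_product_snd s t r (g · ^ 2), mul_sum]
    exact sum_le_sum fun j hj => mul_le_mul_of_nonneg_right (hL j hj) (sq_nonneg _)
  calc (∑ i ∈ s, ∑ j ∈ t, if r i j then f i * g j else 0) ^ 2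
      ≤ (∑ p ∈ R, f p.1 ^ 2) * ∑ p ∈ R, g p.2 ^ 2 := hsum ▸ sum_mul_sq_le_sq_mul_sq R _ _
    _ ≤ _ := mul_le_mul hf hg (sum_nonneg fun _ _ => sq_nonneg _)
        ((sum_nonneg fun _ _ => sq_nonneg _).trans hf)

end SchurTest

section Triangles

variable {α : Type*} [DecidableEq α]

def IsTriangle (e₁ e₂ e₃ : Finset α) : Prop :=
  e₁ ≠ e₂ ∧ e₁ ≠ e₃ ∧ e₂ ≠ e₃ ∧ #(e₁ ∪ e₂ ∪ e₃) = 3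

instance (e₁ e₂ e₃ : Finset α) : Decidable (IsTriangle e₁ e₂ e₃) :=
  inferInstanceAs (Decidable (_ ∧ _))

lemma exists_eq_erase_of_subset {s t : Finset α} (hts : t ⊆ s) (hcard : #s = #t + 1) :
    ∃ v ∈ s, t = s.erase v := by
  obtain ⟨v, hvt, rfl⟩ := exists_eq_insert_iff.2 ⟨hts, hcard.symm⟩
  exact ⟨v, mem_insert_self v t, (erase_insert hvt).symm⟩

/-- Each edge of a triangle is its vertex set minus the opposite vertex. -/
lemma IsTriangle.exists_eq_pairs {e₁ e₂ e₃ : Finset α} (h₁ : #e₁ = 2) (h₂ : #e₂ = 2)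
    (h₃ : #e₃ = 2) (h : IsTriangle e₁ e₂ e₃) :
    ∃ a b c, a ≠ b ∧ a ≠ c ∧ b ≠ c ∧ e₁ = {a, b} ∧ e₂ = {a, c} ∧ e₃ = {b, c} := by
  obtain ⟨h₁₂, h₁₃, h₂₃, hU⟩ := h
  set U := e₁ ∪ e₂ ∪ e₃
  obtain ⟨c, hc, he₁⟩ :=
    exists_eq_erase_of_subset (s := U) (subset_union_left.trans subset_union_left) (by omega)
  obtain ⟨b, hb, he₂⟩ :=
    exists_eq_erase_of_subset (s := U) (subset_union_right.trans subset_union_left) (by omega)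
  obtain ⟨a, ha, he₃⟩ := exists_eq_erase_of_subset (s := U) subset_union_right (by omega)
  have hab : a ≠ b := by rintro rfl; exact h₂₃ (he₂.trans he₃.symm)
  have hac : a ≠ c := by rintro rfl; exact h₁₃ (he₁.trans he₃.symm)
  have hbc : b ≠ c := by rintro rfl; exact h₁₂ (he₁.trans he₂.symm)
  have hUabc : U = {a, b, c} := (eq_of_subset_of_card_le (by simp [insert_subset_iff, *])
    (by rw [hU, card_eq_three.2 ⟨a, b, c, hab, hac, hbc, rfl⟩])).symm
  refine ⟨a, b, c, hab, hac, hbc, he₁.trans ?_, he₂.trans ?_, he₃.trans ?_⟩ <;>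
    rw [hUabc] <;> ext <;> simp <;> grind

lemma IsTriangle.eq_symmDiff {e₁ e₂ e₃ : Finset α} (h₁ : #e₁ = 2) (h₂ : #e₂ = 2)
    (h₃ : #e₃ = 2) (h : IsTriangle e₁ e₂ e₃) : e₁ = symmDiff e₂ e₃ := by
  obtain ⟨a, b, c, hab, hac, hbc, rfl, rfl, rfl⟩ := h.exists_eq_pairs h₁ h₂ h₃
  ext
  simp only [mem_symmDiff, mem_insert, mem_singleton]
  grind

lemma card_filter_isTriangle_le_one (u : Finset α) {e₂ e₃ : Finset α} (h₂ : #e₂ = 2)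
    (h₃ : #e₃ = 2) : #{e₁ ∈ u.powersetCard 2 | IsTriangle e₁ e₂ e₃} ≤ 1 := by
  refine card_le_one.2 fun e he e' he' => ?_
  simp only [mem_filter, mem_powersetCard] at he he'
  rw [he.2.eq_symmDiff he.1.2 h₂ h₃, he'.2.eq_symmDiff he'.1.2 h₂ h₃]

lemma card_filter_isTriangle_le (u : Finset α) {e₁ : Finset α} (h₁ : #e₁ = 2) (hu : e₁ ⊆ u) :
    #{p ∈ u.powersetCard 2 ×ˢ u.powersetCard 2 | IsTriangle e₁ p.1 p.2} ≤ 2 * (#u - 2) := by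
  obtain ⟨a, b, hab, rfl⟩ := card_eq_two.1 h₁
  have hsub : {p ∈ u.powersetCard 2 ×ˢ u.powersetCard 2 | IsTriangle {a, b} p.1 p.2} ⊆
      (u \ {a, b}).image (fun c => ({a, c}, {b, c})) ∪
        (u \ {a, b}).image (fun c => ({b, c}, {a, c})) := by
    rintro ⟨e₂, e₃⟩ hp
    simp only [mem_filter, mem_product, mem_powersetCard] at hp
    obtain ⟨⟨⟨hu₂, h₂⟩, -, h₃⟩, ht⟩ := hp
    obtain ⟨a', b', c, -, hac, hbc, he₁, rfl, rfl⟩ := ht.exists_eq_pairs h₁ h₂ h₃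
    have hc : c ∈ u \ {a, b} := by
      rw [he₁]
      exact mem_sdiff.2 ⟨hu₂ (by simp), by simp [hac.symm, hbc.symm]⟩
    rw [← coe_inj, coe_pair, coe_pair, Set.pair_eq_pair_iff] at he₁
    rcases he₁ with ⟨rfl, rfl⟩ | ⟨rfl, rfl⟩
    · exact mem_union_left _ (mem_image_of_mem _ hc)
    · exact mem_union_right _ (mem_image_of_mem _ hc)
  calc _ ≤ #(u \ {a, b}) + #(u \ {a, b}) := (card_le_card hsub).trans <|
        (card_union_le _ _).trans (add_le_add card_image_le card_image_le)
    _ = 2 * (#u - 2) := by rw [card_sdiff_of_subset hu, card_pair hab]; ring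

end Triangles

/-- The `{2,3}{1}` injective tensor norm bound for the third derivative of the
triangle-counting polynomial: for arrays `x = (x_{e₁})` and `y = (y_{e₂,e₃})` indexed
by (pairs of) two-element subsets of `[n]`, each of Euclidean norm at most `1`,
`∑_{e₁,e₂,e₃ forming a triangle} x_{e₁} y_{e₂,e₃} ≤ √(2(n-2))`, where three edges
form a triangle if they are pairwise distinct and their union has exactly 3
vertices. -/
theorem stmt14 (n : ℕ) (hn : 3 ≤ n)
    (x : Finset (Fin n) → ℝ) (y : Finset (Fin n) → Finset (Fin n) → ℝ)
    (hx : ∑ e ∈ Finset.univ.powersetCard 2, x e ^ 2 ≤ 1)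
    (hy : ∑ e₂ ∈ Finset.univ.powersetCard 2, ∑ e₃ ∈ Finset.univ.powersetCard 2,
      y e₂ e₃ ^ 2 ≤ 1) :
    ∑ e₁ ∈ Finset.univ.powersetCard 2, ∑ e₂ ∈ Finset.univ.powersetCard 2,
        ∑ e₃ ∈ Finset.univ.powersetCard 2,
        (if e₁ ≠ e₂ ∧ e₁ ≠ e₃ ∧ e₂ ≠ e₃ ∧ (e₁ ∪ e₂ ∪ e₃).card = 3 then
          x e₁ * y e₂ e₃ else 0) ≤
      Real.sqrt (2 * ((n : ℝ) - 2)) := by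
  set S : Finset (Finset (Fin n)) := univ.powersetCard 2
  have hK : ∀ e₁ ∈ S, (#{p ∈ S ×ˢ S | IsTriangle e₁ p.1 p.2} : ℝ) ≤ 2 * ((n : ℝ) - 2) := by
    intro e₁ he₁
    have := card_filter_isTriangle_le univ (mem_powersetCard.1 he₁).2 (subset_univ e₁)
    rw [card_univ, Fintype.card_fin] at this
    calc (#{p ∈ S ×ˢ S | IsTriangle e₁ p.1 p.2} : ℝ) ≤ ((2 * (n - 2) : ℕ) : ℝ) :=
          Nat.cast_le.2 this
      _ = 2 * ((n : ℝ) - 2) := by rw [Nat.cast_mul, Nat.cast_sub (by omega)]; norm_num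
  have hL : ∀ p ∈ S ×ˢ S, (#{e₁ ∈ S | IsTriangle e₁ p.1 p.2} : ℝ) ≤ 1 := by
    intro p hp
    obtain ⟨h₂, h₃⟩ := mem_product.1 hp
    exact_mod_cast card_filter_isTriangle_le_one univ (mem_powersetCard.1 h₂).2
      (mem_powersetCard.1 h₃).2
  have hschur := sq_sum_sum_ite_mul_le_of_card_filter_le S (S ×ˢ S)
    (fun e₁ p => IsTriangle e₁ p.1 p.2) x (fun p => y p.1 p.2) hK hL
  simp only [sum_product] at hschur
  refine (le_abs_self _).trans (Real.abs_le_sqrt (hschur.trans ?_))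
  have hn2 : (0 : ℝ) ≤ 2 * ((n : ℝ) - 2) := by
    have : (3 : ℝ) ≤ n := by exact_mod_cast hn
    linarith
  calc _ ≤ 2 * ((n : ℝ) - 2) * 1 :=
        mul_le_mul (mul_le_of_le_one_right hn2 hx) ((one_mul _).trans_le hy) (by positivity) hn2
    _ = _ := mul_one _
end

section
/- Let $(V_r)_{r=1}^l$ be a sequence of finite nonempty sets with union $V$, and for each $r$ let $y^{(r)} = (y^{(r)}_{\mathbf{i}})_{\mathbf{i} \in [n]^{\underline{V_r}}}$ be a nonnegative array indexed by injections from $V_r$ to $[n]$ satisfying $\sum_{\mathbf{i} \in [n]^{\underline{V_r}}} (y^{(r)}_{\mathbf{i}})^2 \le 1$. Let $V_0 = \{v \in V : v \text{ belongs to exactly one } V_r\}$. Then $\sum_{\mathbf{i} \in [n]^{\underline{V}}} \prod_{r=1}^l y^{(r)}_{\mathbf{i}|_{V_r}} \le n^{\#V_0 / 2}$, where $[n]^{\underline{V}}$ denotes the set of injections from $V$ to $[n]$ and $\mathbf{i}|_{V_r}$ is the restriction of $\mathbf{i}$ to $V_r$. -/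
/-!
Fix the values of an injection at all vertices but one, `v`. The remaining sum over the value
at `v` is a sum of a product of the arrays whose sets contain `v`. By Cauchy–Schwarz it is at
most the product of their ℓ²-norms in that coordinate, times `√n` when only one array contains
`v`. Replace each of these arrays by its ℓ²-norm over the `v` coordinate. The new arrays have
the same ℓ²-norms, so induction on the vertex set gives the factor `√n ^ #V₀`. Injectivity can
be dropped at the start: set every array to zero off injections.
-/

open Finset Function

lemma le_sqrt_sum_sq {α : Type*} [Fintype α] (f : α → ℝ) (a : α) : f a ≤ √(∑ b, f b ^ 2) :=
  Real.le_sqrt_of_sq_le (single_le_sum (fun b _ => sq_nonneg (f b)) (mem_univ a))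

lemma sum_le_sqrt_card_mul_sqrt_sum_sq {α : Type*} [Fintype α] (f : α → ℝ) :
    ∑ a, f a ≤ √(Fintype.card α) * √(∑ a, f a ^ 2) := by
  simpa using Real.sum_mul_le_sqrt_mul_sqrt univ (fun _ => (1 : ℝ)) f

lemma sum_prod_le_prod_sqrt_sum_sq {κ α : Type*} [Fintype α] {R : Finset κ} (hR : 2 ≤ #R)
    {f : κ → α → ℝ} (hf : ∀ r a, 0 ≤ f r a) :
    ∑ a, ∏ r ∈ R, f r a ≤ ∏ r ∈ R, √(∑ a, f r a ^ 2) := by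
  classical
  obtain ⟨r₁, hr₁, r₂, hr₂, hne⟩ := one_lt_card.1 hR
  have hP : {r₁, r₂} ⊆ R := insert_subset hr₁ (singleton_subset_iff.2 hr₂)
  set g : κ → ℝ := fun r => √(∑ a, f r a ^ 2)
  calc ∑ a, ∏ r ∈ R, f r a
      = ∑ a, (∏ r ∈ R \ {r₁, r₂}, f r a) * (f r₁ a * f r₂ a) := by
        refine sum_congr rfl fun a _ => ?_
        rw [← prod_sdiff hP, prod_pair hne]
    _ ≤ ∑ a, (∏ r ∈ R \ {r₁, r₂}, g r) * (f r₁ a * f r₂ a) := by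
        gcongr with a _ r
        · exact mul_nonneg (hf r₁ a) (hf r₂ a)
        · exact fun r _ => hf r a
        · exact le_sqrt_sum_sq (f r) a
    _ = (∏ r ∈ R \ {r₁, r₂}, g r) * ∑ a, f r₁ a * f r₂ a := by rw [mul_sum]
    _ ≤ (∏ r ∈ R \ {r₁, r₂}, g r) * (g r₁ * g r₂) := by
        gcongr
        exact Real.sum_mul_le_sqrt_mul_sqrt univ (f r₁) (f r₂)
    _ = ∏ r ∈ R, g r := by rw [← prod_pair hne, prod_sdiff hP]

lemma sum_prod_le_sqrt_card_mul_prod {κ α : Type*} [Fintype α] {R : Finset κ}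
    (hR : R.Nonempty) {f : κ → α → ℝ} (hf : ∀ r a, 0 ≤ f r a) :
    ∑ a, ∏ r ∈ R, f r a ≤
      (if #R = 1 then √(Fintype.card α) else 1) * ∏ r ∈ R, √(∑ a, f r a ^ 2) := by
  split_ifs with h
  · obtain ⟨r, rfl⟩ := card_eq_one.1 h
    simpa using sum_le_sqrt_card_mul_sqrt_sum_sq (f r)
  · rw [one_mul]
    exact sum_prod_le_prod_sqrt_sum_sq (by have := hR.card_pos; omega) hf

section Restriction

variable {ι α : Type*}

lemma injective_restrict₂ {S T : Finset ι} (hTS : T ⊆ S) {i : S → α} (hi : Injective i) :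
    Injective (restrict₂ (π := fun _ => α) hTS i) :=
  fun _ _ h => Subtype.ext (Subtype.mk.inj (hi h))

variable [DecidableEq ι]

def extendAt (S : Finset ι) (v : ι) (z : S.erase v → α) (a : α) : S → α :=
  fun w => if h : w.1 = v then a else z ⟨w.1, mem_erase.2 ⟨h, w.2⟩⟩

def extendAtEquiv {S : Finset ι} {v : ι} (hv : v ∈ S) : ((S.erase v → α) × α) ≃ (S → α) where
  toFun p := extendAt S v p.1 p.2
  invFun i := (restrict₂ (π := fun _ => α) (erase_subset v S) i, i ⟨v, hv⟩)
  left_inv p := by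
    ext w
    · simp [extendAt, (mem_erase.1 w.2).1]
    · simp [extendAt]
  right_inv i := by
    funext w
    by_cases h : w.1 = v
    · obtain ⟨w, hw⟩ := w
      subst h
      simp [extendAt]
    · simp [extendAt, h]

lemma restrict₂_extendAt_of_notMem {S T : Finset ι} {v : ι} (hTS : T ⊆ S) (hv : v ∉ T)
    (z : S.erase v → α) (a : α) :
    restrict₂ (π := fun _ => α) hTS (extendAt S v z a) =
      restrict₂ (π := fun _ => α) (subset_erase.2 ⟨hTS, hv⟩) z := by
  funext w
  simp [extendAt, ne_of_mem_of_not_mem w.2 hv]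

variable [Fintype α]

/-- For `v ∈ S`, the ℓ²-norm of `y` over the coordinate `v`; for `v ∉ S`, `y` itself,
relabelled along `S.erase v = S`. -/
noncomputable def peel (S : Finset ι) (v : ι) (y : (S → α) → ℝ) : (S.erase v → α) → ℝ :=
  if hv : v ∈ S then fun z => √(∑ a, y (extendAt S v z a) ^ 2)
  else fun z => y (restrict₂ (π := fun _ => α) (subset_erase.2 ⟨subset_rfl, hv⟩) z)

lemma peel_of_mem {S : Finset ι} {v : ι} (hv : v ∈ S) (y : (S → α) → ℝ) (z : S.erase v → α) :
    peel S v y z = √(∑ a, y (extendAt S v z a) ^ 2) := by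
  simp [peel, hv]

lemma peel_restrict₂_of_notMem {S U : Finset ι} {v : ι} (hSU : S ⊆ U) (hv : v ∉ S)
    (y : (S → α) → ℝ) (j : U.erase v → α) :
    peel S v y (restrict₂ (π := fun _ => α) (erase_subset_erase v hSU) j) =
      y (restrict₂ (π := fun _ => α) (subset_erase.2 ⟨hSU, hv⟩) j) := by
  simp only [peel, hv, dite_false]
  rfl

lemma peel_nonneg {S : Finset ι} {v : ι} {y : (S → α) → ℝ} (hy : ∀ z, 0 ≤ y z)
    (z : S.erase v → α) : 0 ≤ peel S v y z := by
  unfold peel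
  split_ifs
  exacts [Real.sqrt_nonneg _, hy _]

lemma sum_peel_sq (S : Finset ι) (v : ι) (y : (S → α) → ℝ) :
    ∑ z, peel S v y z ^ 2 = ∑ w, y w ^ 2 := by
  by_cases hv : v ∈ S
  · simp only [peel_of_mem hv, Real.sq_sqrt (sum_nonneg fun _ _ => sq_nonneg _)]
    rw [← Fintype.sum_prod_type', ← (extendAtEquiv hv).sum_comp]
    rfl
  · let e : (S.erase v → α) ≃ (S → α) :=
      { toFun := restrict₂ (π := fun _ => α) (subset_erase.2 ⟨subset_rfl, hv⟩)
        invFun := restrict₂ (π := fun _ => α) (erase_subset v S)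
        left_inv := fun _ => rfl
        right_inv := fun _ => rfl }
    simp only [peel, hv, dite_false]
    exact e.sum_comp (fun w => y w ^ 2)

end Restriction

section Covering

variable {ι α κ : Type*} [DecidableEq ι] [Fintype α] [Fintype κ]

/-- The paper's `V₀`. -/
def uniquelyCovered (V : κ → Finset ι) (U : Finset ι) : Finset ι :=
  U.filter fun x => #(univ.filter fun r => x ∈ V r) = 1

lemma uniquelyCovered_erase (V : κ → Finset ι) (U : Finset ι) (v : ι) :
    uniquelyCovered (fun r => (V r).erase v) (U.erase v) = (uniquelyCovered V U).erase v := by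
  ext x
  by_cases hx : x = v <;> simp [uniquelyCovered, hx]

lemma pow_card_uniquelyCovered {M : Type*} [Monoid M] (V : κ → Finset ι) {U : Finset ι} {v : ι}
    (hv : v ∈ U) (b : M) :
    b ^ #(uniquelyCovered V U) =
      (if #(univ.filter fun r => v ∈ V r) = 1 then b else 1) *
        b ^ #((uniquelyCovered V U).erase v) := by
  split_ifs with h
  · have hvQ : v ∈ uniquelyCovered V U := mem_filter.2 ⟨hv, h⟩
    rw [← pow_succ', card_erase_add_one hvQ]
  · have hvQ : v ∉ uniquelyCovered V U := fun hvQ => h (mem_filter.1 hvQ).2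
    rw [one_mul, erase_eq_of_notMem hvQ]

lemma sum_prod_extendAt_le {U : Finset ι} {v : ι} (V : κ → Finset ι) (hVU : ∀ r, V r ⊆ U)
    (hcov : ∃ r, v ∈ V r) {y : (r : κ) → (V r → α) → ℝ} (hy : ∀ r z, 0 ≤ y r z)
    (j : U.erase v → α) :
    ∑ a, ∏ r, y r (restrict₂ (π := fun _ => α) (hVU r) (extendAt U v j a)) ≤
      (if #(univ.filter fun r => v ∈ V r) = 1 then √(Fintype.card α) else 1) *
        ∏ r, peel (V r) v (y r) (restrict₂ (π := fun _ => α) (erase_subset_erase v (hVU r)) j) := by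
  set R := univ.filter fun r => v ∈ V r
  set f : κ → α → ℝ := fun r a =>
    y r (extendAt (V r) v (restrict₂ (π := fun _ => α) (erase_subset_erase v (hVU r)) j) a)
  set C := ∏ r ∈ univ.filter (fun r => v ∉ V r),
    peel (V r) v (y r) (restrict₂ (π := fun _ => α) (erase_subset_erase v (hVU r)) j)
  have hsplit : ∀ a, ∏ r, y r (restrict₂ (π := fun _ => α) (hVU r) (extendAt U v j a)) =
      (∏ r ∈ R, f r a) * C := by
    intro a
    rw [← prod_filter_mul_prod_filter_not univ (fun r => v ∈ V r)]
    congr 1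
    refine prod_congr rfl fun r hr => ?_
    have hr : v ∉ V r := (mem_filter.1 hr).2
    rw [restrict₂_extendAt_of_notMem (hVU r) hr, peel_restrict₂_of_notMem (hVU r) hr]
  have hR : R.Nonempty := by
    obtain ⟨r, hr⟩ := hcov
    exact ⟨r, mem_filter.2 ⟨mem_univ r, hr⟩⟩
  calc ∑ a, ∏ r, y r (restrict₂ (π := fun _ => α) (hVU r) (extendAt U v j a))
      = (∑ a, ∏ r ∈ R, f r a) * C := by simp only [hsplit, sum_mul]
    _ ≤ ((if #R = 1 then √(Fintype.card α) else 1) * ∏ r ∈ R, √(∑ a, f r a ^ 2)) * C := by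
        gcongr
        · exact prod_nonneg fun r _ => peel_nonneg (hy r) _
        · exact sum_prod_le_sqrt_card_mul_prod hR fun r a => hy r _
    _ = (if #R = 1 then √(Fintype.card α) else 1) *
        ∏ r, peel (V r) v (y r) (restrict₂ (π := fun _ => α) (erase_subset_erase v (hVU r)) j) := by
        rw [mul_assoc, ← prod_filter_mul_prod_filter_not univ (fun r => v ∈ V r)]
        congr 2
        exact prod_congr rfl fun r hr => (peel_of_mem (mem_filter.1 hr).2 _ _).symm

theorem sum_prod_restrict₂_le (U : Finset ι) (V : κ → Finset ι) (hVU : ∀ r, V r ⊆ U)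
    (hcov : ∀ x ∈ U, ∃ r, x ∈ V r) (y : (r : κ) → (V r → α) → ℝ) (hy : ∀ r z, 0 ≤ y r z) :
    ∑ i : U → α, ∏ r, y r (restrict₂ (π := fun _ => α) (hVU r) i) ≤
      √(Fintype.card α) ^ #(uniquelyCovered V U) * ∏ r, √(∑ z, y r z ^ 2) := by
  induction U using Finset.strongInduction generalizing V y with
  | H U ih =>
  obtain rfl | ⟨v, hv⟩ := U.eq_empty_or_nonempty
  · rw [Fintype.sum_unique, uniquelyCovered, filter_empty, card_empty, pow_zero, one_mul]
    exact prod_le_prod (fun r _ => hy r _) fun r _ => le_sqrt_sum_sq (y r) _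
  set W : κ → Finset ι := fun r => (V r).erase v
  have hWU : ∀ r, W r ⊆ U.erase v := fun r => erase_subset_erase v (hVU r)
  have hcovW : ∀ x ∈ U.erase v, ∃ r, x ∈ W r := fun x hx => by
    obtain ⟨r, hr⟩ := hcov x (mem_of_mem_erase hx)
    exact ⟨r, mem_erase.2 ⟨ne_of_mem_erase hx, hr⟩⟩
  set c : ℝ := if #(univ.filter fun r => v ∈ V r) = 1 then √(Fintype.card α) else 1
  calc ∑ i : U → α, ∏ r, y r (restrict₂ (π := fun _ => α) (hVU r) i)
      = ∑ j, ∑ a, ∏ r, y r (restrict₂ (π := fun _ => α) (hVU r) (extendAt U v j a)) := by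
        rw [← (extendAtEquiv hv).sum_comp, Fintype.sum_prod_type]
        rfl
    _ ≤ ∑ j, c * ∏ r, peel (V r) v (y r) (restrict₂ (π := fun _ => α) (hWU r) j) :=
        sum_le_sum fun j _ => sum_prod_extendAt_le V hVU (hcov v hv) hy j
    _ = c * ∑ j, ∏ r, peel (V r) v (y r) (restrict₂ (π := fun _ => α) (hWU r) j) := by
        rw [mul_sum]
    _ ≤ c * (√(Fintype.card α) ^ #(uniquelyCovered W (U.erase v)) *
          ∏ r, √(∑ z, peel (V r) v (y r) z ^ 2)) := by
        gcongr
        exact ih _ (erase_ssubset hv) W hWU hcovW _ fun r => peel_nonneg (hy r)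
    _ = √(Fintype.card α) ^ #(uniquelyCovered V U) * ∏ r, √(∑ z, y r z ^ 2) := by
        simp only [W, uniquelyCovered_erase, sum_peel_sq, pow_card_uniquelyCovered V hv, c,
          mul_assoc]

end Covering

theorem stmt15_general (ι : Type) [DecidableEq ι] (n l : ℕ)
    (V : Fin l → Finset ι)
    (y : (r : Fin l) → ({v : ι // v ∈ V r} → Fin n) → ℝ)
    (hynn : ∀ r z, 0 ≤ y r z)
    (hy : ∀ r, ∑ z : {v : ι // v ∈ V r} → Fin n,
      (if Function.Injective z then y r z ^ 2 else 0) ≤ 1) :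
    (∑ i : {v : ι // v ∈ Finset.univ.biUnion V} → Fin n,
        if Function.Injective i then
          ∏ r : Fin l, y r
            (fun v => i ⟨v.1, Finset.mem_biUnion.2 ⟨r, Finset.mem_univ r, v.2⟩⟩)
        else 0) ≤
      (n : ℝ) ^
        ((((Finset.univ.biUnion V).filter
            (fun v => (Finset.univ.filter (fun r : Fin l => v ∈ V r)).card = 1)).card
          : ℝ) / 2) := by
  have hVU : ∀ r, V r ⊆ univ.biUnion V := fun r => subset_biUnion_of_mem V (mem_univ r)
  have hcov : ∀ x ∈ univ.biUnion V, ∃ r, x ∈ V r := fun x hx => by simpa using hx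
  set y' : (r : Fin l) → (V r → Fin n) → ℝ := fun r z => if Injective z then y r z else 0
  have hy' : ∀ r z, 0 ≤ y' r z := fun r z => by by_cases hz : Injective z <;> simp [y', hz, hynn]
  calc _ ≤ ∑ i, ∏ r, y' r (restrict₂ (π := fun _ => Fin n) (hVU r) i) := by
        refine sum_le_sum fun i _ => ?_
        split_ifs with hi
        · exact (prod_congr rfl fun r _ => (if_pos (injective_restrict₂ (hVU r) hi)).symm).le
        · exact prod_nonneg fun r _ => hy' r _
    _ ≤ √n ^ #(uniquelyCovered V (univ.biUnion V)) * ∏ r, √(∑ z, y' r z ^ 2) := by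
        simpa using sum_prod_restrict₂_le _ V hVU hcov y' hy'
    _ ≤ √n ^ #(uniquelyCovered V (univ.biUnion V)) * 1 := by
        gcongr
        refine prod_le_one (fun r _ => Real.sqrt_nonneg _) fun r _ => Real.sqrt_le_one.2 ?_
        simpa [y', apply_ite (· ^ 2)] using hy r
    _ = _ := by
        rw [mul_one, Real.sqrt_eq_rpow, ← Real.rpow_natCast, ← Real.rpow_mul (Nat.cast_nonneg n)]
        congr 1
        simp only [uniquelyCovered]
        ring

/-- The key combinatorial inequality for norms of derivatives of subgraph-counting
polynomials: if `V₁,…,V_l` are finite nonempty sets with union `V`, and for each `r`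
the nonnegative array `y^{(r)}`, indexed by injections `V_r → [n]`, has Euclidean norm
at most `1`, then `∑_{i : V ↪ [n]} ∏_r y^{(r)}_{i|_{V_r}} ≤ n^{#V₀/2}`, where `V₀` is
the set of vertices belonging to exactly one `V_r`. -/
theorem stmt15 (ι : Type) [DecidableEq ι] (n l : ℕ)
    (V : Fin l → Finset ι) (hV : ∀ r, (V r).Nonempty)
    (y : (r : Fin l) → ({v : ι // v ∈ V r} → Fin n) → ℝ)
    (hynn : ∀ r z, 0 ≤ y r z)
    (hy : ∀ r, ∑ z : {v : ι // v ∈ V r} → Fin n,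
      (if Function.Injective z then y r z ^ 2 else 0) ≤ 1) :
    (∑ i : {v : ι // v ∈ Finset.univ.biUnion V} → Fin n,
        if Function.Injective i then
          ∏ r : Fin l, y r
            (fun v => i ⟨v.1, Finset.mem_biUnion.2 ⟨r, Finset.mem_univ r, v.2⟩⟩)
        else 0) ≤
      (n : ℝ) ^
        ((((Finset.univ.biUnion V).filter
            (fun v => (Finset.univ.filter (fun r : Fin l => v ∈ V r)).card = 1)).card
          : ℝ) / 2) :=
  stmt15_general ι n l V y hynn hy
end
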